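/- arXiv:1809.05005 — 3 statements merged into one kernel-verified Lean document; each statement's English description precedes it below -/
import Mathlib

section
/- Let (X, σ) be a subshift on a countable alphabet and F a sequence on X with tempered variation satisfying (C1) and (D2). Then P(F) < ∞ if and only if Z_1(F) < ∞. -/
open Filter Topology MeasureTheory
open scoped ENNReal

namespace CSS

/-- The full shift space over the countable alphabet `ℕ`. -/
abbrev FullShift : Type := ℕ → ℕ

/-- The (one-sided) shift map. -/
def shift : FullShift → FullShift := fun x n => x (n + 1)

/-- The cylinder set determined by a word. -/
def cyl (w : List ℕ) : Set FullShift := {x | ∀ i : Fin w.length, x i.1 = w.get i}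

/-- A subshift on a countable alphabet: a closed, shift-invariant subset of the full shift. -/
def IsSubshift (X : Set FullShift) : Prop := IsClosed X ∧ shift '' X ⊆ X

/-- The word `w` is allowable for `X` (the cylinder of `w` meets `X`). -/
def Allow (X : Set FullShift) (w : List ℕ) : Prop := ∃ x ∈ X, x ∈ cyl w

/-- A word is allowed by a transition matrix `t`. -/
def WordAllowed (t : ℕ → ℕ → Prop) (w : List ℕ) : Prop :=
  ∀ i : ℕ, ∀ h : i + 1 < w.length, t (w.get ⟨i, Nat.lt_of_succ_lt h⟩) (w.get ⟨i + 1, h⟩)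

/-- The countable Markov shift determined by the transition matrix `t`. -/
def markov (t : ℕ → ℕ → Prop) : Set FullShift := {x | ∀ n, t (x n) (x (n + 1))}

/-- The transition matrix has no row and no column made entirely of zeros. -/
def NoZeroRowCol (t : ℕ → ℕ → Prop) : Prop := (∀ i, ∃ j, t i j) ∧ (∀ j, ∃ i, t i j)

/-- The Markov shift of `t` restricted to the symbols `< N`. -/
def markovRestr (t : ℕ → ℕ → Prop) (N : ℕ) : Set FullShift :=
  {x | (∀ n, t (x n) (x (n + 1))) ∧ ∀ n, x n < N}

/-- The restriction of `t` to the symbols `< N` is an irreducible matrix. -/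
def MatIrred (t : ℕ → ℕ → Prop) (N : ℕ) : Prop :=
  ∀ i < N, ∀ j < N, ∃ w : List ℕ, (∀ a ∈ w, a < N) ∧ WordAllowed t ([i] ++ w ++ [j])

/-- A subshift is irreducible. -/
def Irreducible (X : Set FullShift) : Prop :=
  ∀ u v, Allow X u → Allow X v → ∃ w, Allow X (u ++ w ++ v)

/-- The weak specification property. -/
def WeakSpec (X : Set FullShift) : Prop :=
  ∃ p : ℕ, ∀ u v, Allow X u → Allow X v → ∃ w, w.length ≤ p ∧ Allow X (u ++ w ++ v)

/-- A subshift is finitely irreducible. -/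
def FinIrreducible (X : Set FullShift) : Prop :=
  ∃ (p : ℕ) (W : Finset (List ℕ)), (∀ w ∈ W, w.length ≤ p ∧ Allow X w) ∧
    ∀ u v, Allow X u → Allow X v → ∃ w ∈ W, Allow X (u ++ w ++ v)

/-- A countable Markov shift (given by its matrix) is topologically mixing. -/
def TopMixingT (t : ℕ → ℕ → Prop) : Prop :=
  ∀ a b : ℕ, ∃ N : ℕ, ∀ n > N, ∃ w : List ℕ, w.length = n ∧ WordAllowed t w ∧
    w.head? = some a ∧ w.getLast? = some b

/-- The big images and preimages property. -/
def BIP (t : ℕ → ℕ → Prop) : Prop :=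
  ∃ S : Finset ℕ, ∀ a : ℕ, (∃ b ∈ S, t b a) ∧ (∃ b ∈ S, t a b)

/-- A countable Markov shift (given by its matrix) is finitely primitive. -/
def FinPrimitiveT (t : ℕ → ℕ → Prop) : Prop :=
  ∃ (p : ℕ) (W : Finset (List ℕ)), (∀ w ∈ W, w.length = p ∧ WordAllowed t w) ∧
    ∀ u v, WordAllowed t u → WordAllowed t v → ∃ w ∈ W, WordAllowed t (u ++ w ++ v)

/-- The one-block code induced by a map on symbols. -/
def oneBlock (φ : ℕ → ℕ) : FullShift → FullShift := fun x n => φ (x n)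

/-- The word given by the first `n` symbols of `x`. -/
def prefixWord (x : FullShift) (n : ℕ) : List ℕ := List.ofFn (fun i : Fin n => x i.1)

/-- The number of allowable words of `X` mapping to the word `v` under the one-block code. -/
noncomputable def preCount (X : Set FullShift) (φ : ℕ → ℕ) (v : List ℕ) : ℕ :=
  Set.ncard {u : List ℕ | Allow X u ∧ u.map φ = v}

/-- The sequence Φ = {log φ_n}, φ_n(y) = |π⁻¹(y₁…y_n)|. -/
noncomputable def phiSeq (X : Set FullShift) (φ : ℕ → ℕ) : ℕ → FullShift → ℝ :=
  fun n y => (preCount X φ (prefixWord y n) : ℝ)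

variable (X : Set FullShift) (f : ℕ → FullShift → ℝ)

/-- Each function of the sequence is positive on `X`. -/
def SeqPos : Prop := ∀ n, 0 < n → ∀ x ∈ X, 0 < f n x

/-- Each function of the sequence is continuous on `X`. -/
def SeqCont : Prop := ∀ n, 0 < n → ContinuousOn (f n) X

/-- `sup {f_{|w|}(x) : x ∈ [w] ∩ X}`. -/
noncomputable def supW (w : List ℕ) : ℝ := sSup (f w.length '' (X ∩ cyl w))

/-- `sup {log f_{|w|}(x) : x ∈ [w] ∩ X}`. -/
noncomputable def supLogW (w : List ℕ) : ℝ :=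
  sSup ((fun x => Real.log (f w.length x)) '' (X ∩ cyl w))

/-- The `n`-th variation of the sequence is bounded by `M`. -/
def VarBddBy (n : ℕ) (M : ℝ) : Prop :=
  ∀ x ∈ X, ∀ y ∈ X, (∀ i < n, x i = y i) → f n x ≤ M * f n y

/-- Bowen sequence with constant `M`. -/
def BowenWith (M : ℝ) : Prop := ∀ n, 0 < n → VarBddBy X f n M

/-- Bowen sequence. -/
def Bowen : Prop := ∃ M : ℝ, 0 < M ∧ BowenWith X f M

/-- Tempered variation with variation constants `Mseq`. -/
def TemperedWith (Mseq : ℕ → ℝ) : Prop :=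
  (∀ n, 0 < n → 0 < Mseq n ∧ VarBddBy X f n (Mseq n)) ∧
  Tendsto (fun n : ℕ => Real.log (Mseq n) / (n : ℝ)) atTop (𝓝 0)

/-- Tempered variation. -/
def Tempered : Prop := ∃ Mseq : ℕ → ℝ, TemperedWith X f Mseq

/-- `F + C` is sub-additive: `f_{n+m}(x) ≤ e^C f_n(x) f_m(σ^n x)`. -/
def SubAddWith (C : ℝ) : Prop :=
  ∀ n m, 0 < n → 0 < m → ∀ x ∈ X, f (n + m) x ≤ Real.exp C * (f n x * f m (shift^[n] x))

/-- Condition (C1). -/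
def CondC1 : Prop := ∃ C : ℝ, 0 ≤ C ∧ SubAddWith X f C

/-- Almost-additivity with constant `C`. -/
def AlmostAddWith (C : ℝ) : Prop :=
  ∀ n m, 0 < n → 0 < m → ∀ x ∈ X,
    Real.exp (-C) * (f n x * f m (shift^[n] x)) ≤ f (n + m) x ∧
    f (n + m) x ≤ Real.exp C * (f n x * f m (shift^[n] x))

/-- Almost-additive sequence. -/
def AlmostAdd : Prop := ∃ C : ℝ, 0 ≤ C ∧ AlmostAddWith X f C

/-- Condition (C2) with constants `D`, `p`. -/
def C2With (D : ℝ) (p : ℕ) : Prop :=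
  ∀ u v : List ℕ, 0 < u.length → 0 < v.length → Allow X u → Allow X v →
    ∃ w : List ℕ, w.length ≤ p ∧ Allow X (u ++ w ++ v) ∧
      D * (supW X f u * supW X f v) ≤ supW X f (u ++ w ++ v)

/-- Condition (C2). -/
def CondC2 : Prop := ∃ D : ℝ, 0 < D ∧ ∃ p : ℕ, C2With X f D p

/-- Condition (C2) with all connecting words of length exactly `p` (strong specification). -/
def C2StrongWith (D : ℝ) (p : ℕ) : Prop :=
  ∀ u v : List ℕ, 0 < u.length → 0 < v.length → Allow X u → Allow X v →
    ∃ w : List ℕ, w.length = p ∧ Allow X (u ++ w ++ v) ∧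
      D * (supW X f u * supW X f v) ≤ supW X f (u ++ w ++ v)

/-- Condition (C3): a finite set `W` of connecting words realizing (C2). -/
def C3With (D : ℝ) (p : ℕ) (W : Finset (List ℕ)) : Prop :=
  (∀ w ∈ W, w.length ≤ p) ∧
  ∀ u v : List ℕ, 0 < u.length → 0 < v.length → Allow X u → Allow X v →
    ∃ w ∈ W, Allow X (u ++ w ++ v) ∧
      D * (supW X f u * supW X f v) ≤ supW X f (u ++ w ++ v)

/-- Condition (C3). -/
def CondC3 : Prop := ∃ D : ℝ, 0 < D ∧ ∃ (p : ℕ) (W : Finset (List ℕ)), C3With X f D p W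

/-- The constants `D_{n,m}` are subexponential in each variable. -/
def TemperedConsts (Dnm : ℕ → ℕ → ℝ) : Prop :=
  (∀ n m, 0 < Dnm n m) ∧
  (∀ m, Tendsto (fun n : ℕ => Real.log (Dnm n m) / (n : ℝ)) atTop (𝓝 0)) ∧
  (∀ n, Tendsto (fun m : ℕ => Real.log (Dnm n m) / (m : ℝ)) atTop (𝓝 0))

/-- Condition (D2) with constants `D_{n,m}` and `p`. -/
def D2With (Dnm : ℕ → ℕ → ℝ) (p : ℕ) : Prop :=
  TemperedConsts Dnm ∧
  ∀ u v : List ℕ, 0 < u.length → 0 < v.length → Allow X u → Allow X v →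
    ∃ w : List ℕ, w.length ≤ p ∧ Allow X (u ++ w ++ v) ∧
      Dnm u.length v.length * (supW X f u * supW X f v) ≤ supW X f (u ++ w ++ v)

/-- Condition (D2). -/
def CondD2 : Prop := ∃ (Dnm : ℕ → ℕ → ℝ) (p : ℕ), D2With X f Dnm p

/-- Condition (D2) with all connecting words of length exactly `p` (strong specification). -/
def D2StrongWith (Dnm : ℕ → ℕ → ℝ) (p : ℕ) : Prop :=
  TemperedConsts Dnm ∧
  ∀ u v : List ℕ, 0 < u.length → 0 < v.length → Allow X u → Allow X v →
    ∃ w : List ℕ, w.length = p ∧ Allow X (u ++ w ++ v) ∧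
      Dnm u.length v.length * (supW X f u * supW X f v) ≤ supW X f (u ++ w ++ v)

/-- Condition (D3): a finite set `W` of connecting words realizing (D2). -/
def D3With (Dnm : ℕ → ℕ → ℝ) (p : ℕ) (W : Finset (List ℕ)) : Prop :=
  TemperedConsts Dnm ∧ (∀ w ∈ W, w.length ≤ p) ∧
  ∀ u v : List ℕ, 0 < u.length → 0 < v.length → Allow X u → Allow X v →
    ∃ w ∈ W, Allow X (u ++ w ++ v) ∧
      Dnm u.length v.length * (supW X f u * supW X f v) ≤ supW X f (u ++ w ++ v)

/-- Condition (D3). -/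
def CondD3 : Prop := ∃ (Dnm : ℕ → ℕ → ℝ) (p : ℕ) (W : Finset (List ℕ)), D3With X f Dnm p W

/-- The partition function `Z_n(F)`. -/
noncomputable def Zn (n : ℕ) : ℝ≥0∞ :=
  ∑' w : {w : List ℕ // w.length = n ∧ Allow X w}, ENNReal.ofReal (supW X f w.1)

/-- The topological pressure `P(F)`. -/
noncomputable def pressure : EReal :=
  limsup (fun n : ℕ => ((n : ℝ)⁻¹ : EReal) * ENNReal.log (Zn X f n)) atTop

/-- The Gurevich partition function `Z_n(F, a)` over periodic points starting at `a`. -/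
noncomputable def ZG (a : ℕ) (n : ℕ) : ℝ≥0∞ :=
  ∑' x : {x : FullShift // x ∈ X ∧ shift^[n] x = x ∧ x 0 = a}, ENNReal.ofReal (f n x.1)

/-- The Gurevich pressure at the symbol `a`. -/
noncomputable def gurevich (a : ℕ) : EReal :=
  limsup (fun n : ℕ => ((n : ℝ)⁻¹ : EReal) * ENNReal.log (ZG X f a n)) atTop

/-- Condition (P1) with explicit data. -/
def P1With (t : ℕ → ℕ → Prop) (l : ℕ → ℕ) (D₁ : ℝ) (p₁ : ℕ) : Prop :=
  0 < D₁ ∧ StrictMono l ∧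
    ∀ n : ℕ, MatIrred t (l n) ∧ ∃ D, D₁ ≤ D ∧ ∃ p ≤ p₁, C2With (markovRestr t (l n)) f D p

/-- Condition (P1). -/
def P1 (t : ℕ → ℕ → Prop) : Prop := ∃ (l : ℕ → ℕ) (D₁ : ℝ) (p₁ : ℕ), P1With f t l D₁ p₁

/-- A `σ`-invariant Borel probability measure supported on `X`. -/
def InvariantProb (μ : Measure FullShift) : Prop :=
  IsProbabilityMeasure μ ∧ μ X = 1 ∧ MeasurePreserving shift μ μ

/-- The entropy of the cylinder partition of length `n`. -/
noncomputable def entH (μ : Measure FullShift) (n : ℕ) : ℝ≥0∞ :=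
  ∑' w : {w : List ℕ // w.length = n}, ENNReal.ofReal (Real.negMulLog (μ (cyl w.1)).toReal)

/-- The Kolmogorov–Sinai entropy of `μ` (computed along the generating cylinder partitions). -/
noncomputable def entropy (μ : Measure FullShift) : EReal :=
  limsup (fun n : ℕ => ((n : ℝ)⁻¹ : EReal) * ((entH μ n : ℝ≥0∞) : EReal)) atTop

/-- The `EReal`-valued integral of `log g`. -/
noncomputable def elogInt (μ : Measure FullShift) (g : FullShift → ℝ) : EReal :=
  ((∫⁻ x, ENNReal.ofReal (Real.log (g x)) ∂μ : ℝ≥0∞) : EReal)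
    - ((∫⁻ x, ENNReal.ofReal (-Real.log (g x)) ∂μ : ℝ≥0∞) : EReal)

/-- The averages `(1/n) ∫ log f_n dμ`. -/
noncomputable def lyapAvg (μ : Measure FullShift) (n : ℕ) : EReal :=
  ((n : ℝ)⁻¹ : EReal) * elogInt μ (f n)

/-- `lim_n (1/n) ∫ log f_n dμ = L`. -/
def HasLyap (μ : Measure FullShift) (L : EReal) : Prop := Tendsto (lyapAvg f μ) atTop (𝓝 L)

/-- `limsup_n (1/n) ∫ log f_n dμ`. -/
noncomputable def lyapSup (μ : Measure FullShift) : EReal := limsup (lyapAvg f μ) atTop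

/-- The supremum in the variational principle (limit version). -/
noncomputable def vpLim : EReal :=
  sSup {r : EReal | ∃ (μ : Measure FullShift) (L : EReal), InvariantProb X μ ∧
    HasLyap f μ L ∧ L ≠ ⊥ ∧ r = entropy μ + L}

/-- The supremum in the variational principle (limsup version). -/
noncomputable def vpLimsup : EReal :=
  sSup {r : EReal | ∃ μ : Measure FullShift, InvariantProb X μ ∧
    lyapSup f μ ≠ ⊥ ∧ r = entropy μ + lyapSup f μ}

/-- `μ` is a Gibbs measure for the sequence `F`. -/
def IsGibbs (μ : Measure FullShift) : Prop :=
  ∃ C₀ P : ℝ, 0 < C₀ ∧ ∀ w : List ℕ, 0 < w.length → Allow X w → ∀ x ∈ X ∩ cyl w,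
    ENNReal.ofReal (C₀⁻¹ * (Real.exp (-(w.length : ℝ) * P) * f w.length x)) ≤ μ (cyl w) ∧
    μ (cyl w) ≤ ENNReal.ofReal (C₀ * (Real.exp (-(w.length : ℝ) * P) * f w.length x))

/-- `μ` is an equilibrium measure for the sequence `F`. -/
def IsEquilibrium (μ : Measure FullShift) : Prop :=
  InvariantProb X μ ∧ ∃ L : EReal, HasLyap f μ L ∧ pressure X f = entropy μ + L

/-- The `EReal`-valued sum of a real series. -/
noncomputable def esum (g : ℕ → ℝ) : EReal :=
  ((∑' i, ENNReal.ofReal (g i) : ℝ≥0∞) : EReal) - ((∑' i, ENNReal.ofReal (-g i) : ℝ≥0∞) : EReal)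

/-- A sofic shift on a finite alphabet: the image of a finite-state Markov shift
under a one-block factor map. -/
def IsFinSofic (Y : Set FullShift) : Prop :=
  ∃ (s : ℕ → ℕ → Prop) (N : ℕ) (ψ : ℕ → ℕ), Y = oneBlock ψ '' markovRestr s N

end CSS

namespace CSS

section Aux

variable {X : Set FullShift} {f : ℕ → FullShift → ℝ}

private lemma shift_mem_of_subshift (hX : IsSubshift X) {x : FullShift} (hx : x ∈ X) :
    shift x ∈ X := hX.2 ⟨x, hx, rfl⟩

private lemma mem_cyl_cons {a : ℕ} {w : List ℕ} {x : FullShift} (hx : x ∈ cyl (a :: w)) :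
    x 0 = a ∧ shift x ∈ cyl w := by
  constructor
  · exact hx ⟨0, Nat.succ_pos _⟩
  · intro i
    have := hx ⟨i.1 + 1, Nat.succ_lt_succ i.2⟩
    simpa [shift] using this

private lemma mem_cyl_singleton {a : ℕ} {x : FullShift} (h : x 0 = a) : x ∈ cyl [a] := by
  rintro ⟨i, hi⟩
  have h0 : i = 0 := Nat.lt_one_iff.mp (by simpa using hi)
  subst h0
  exact h

private lemma allow_head {a : ℕ} {w : List ℕ} (h : Allow X (a :: w)) : Allow X [a] := by
  obtain ⟨x, hxX, hxc⟩ := h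
  exact ⟨x, hxX, mem_cyl_singleton (mem_cyl_cons hxc).1⟩

private lemma allow_tail (hX : IsSubshift X) {a : ℕ} {w : List ℕ} (h : Allow X (a :: w)) :
    Allow X w := by
  obtain ⟨x, hxX, hxc⟩ := h
  exact ⟨shift x, shift_mem_of_subshift hX hxX, (mem_cyl_cons hxc).2⟩

private lemma supW_nonneg (hpos : SeqPos X f) {w : List ℕ} (hw : 0 < w.length) :
    0 ≤ supW X f w := by
  apply Real.sSup_nonneg
  rintro r ⟨x, ⟨hxX, -⟩, rfl⟩
  exact (hpos _ hw x hxX).le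

private lemma bddAbove_aux (hX : IsSubshift X) (hpos : SeqPos X f)
    {M₁ : ℝ} (hvar : VarBddBy X f 1 M₁) {C : ℝ} (hsub : SubAddWith X f C) :
    ∀ w : List ℕ, 0 < w.length → Allow X w → BddAbove (f w.length '' (X ∩ cyl w)) := by
  intro w
  induction w with
  | nil => intro h; simp at h
  | cons a w' ih =>
    intro _ hall
    rcases Nat.eq_zero_or_pos w'.length with h0 | hlen
    · have hw' : w' = [] := List.length_eq_zero_iff.mp h0
      subst hw'
      obtain ⟨y, hyX, hyc⟩ := hall
      refine ⟨M₁ * f 1 y, ?_⟩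
      rintro r ⟨x, ⟨hxX, hxc⟩, rfl⟩
      refine hvar x hxX y hyX fun i hi => ?_
      have h1 : i = 0 := Nat.lt_one_iff.mp hi
      subst h1
      rw [(mem_cyl_cons hxc).1, (mem_cyl_cons hyc).1]
    · have hall' : Allow X w' := allow_tail hX hall
      obtain ⟨B, hB⟩ := ih hlen hall'
      obtain ⟨y, hyX, hyc⟩ := allow_head hall
      refine ⟨Real.exp C * ((M₁ * f 1 y) * B), ?_⟩
      rintro r ⟨x, ⟨hxX, hxc⟩, rfl⟩
      have hsx : shift x ∈ X := shift_mem_of_subshift hX hxX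
      have h1 : f 1 x ≤ M₁ * f 1 y := by
        refine hvar x hxX y hyX fun i hi => ?_
        have h1 : i = 0 := Nat.lt_one_iff.mp hi
        subst h1
        rw [(mem_cyl_cons hxc).1]
        exact (hyc ⟨0, Nat.one_pos⟩).symm
      have h2 : f w'.length (shift x) ≤ B := hB ⟨shift x, ⟨hsx, (mem_cyl_cons hxc).2⟩, rfl⟩
      have hx1 : 0 < f 1 x := hpos 1 one_pos x hxX
      have hx2 : 0 < f w'.length (shift x) := hpos _ hlen _ hsx
      calc f (a :: w').length x = f (1 + w'.length) x := by
            rw [List.length_cons, Nat.add_comm]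
        _ ≤ Real.exp C * (f 1 x * f w'.length (shift^[1] x)) :=
            hsub 1 w'.length one_pos hlen x hxX
        _ = Real.exp C * (f 1 x * f w'.length (shift x)) := by rw [Function.iterate_one]
        _ ≤ Real.exp C * ((M₁ * f 1 y) * B) := by
            refine mul_le_mul_of_nonneg_left ?_ (Real.exp_nonneg C)
            exact mul_le_mul h1 h2 hx2.le (le_trans hx1.le h1)

private lemma apply_le_supW (hX : IsSubshift X) (hpos : SeqPos X f)
    {M₁ : ℝ} (hvar : VarBddBy X f 1 M₁) {C : ℝ} (hsub : SubAddWith X f C)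
    {w : List ℕ} (hw : 0 < w.length) (hall : Allow X w) {x : FullShift}
    (hx : x ∈ X ∩ cyl w) : f w.length x ≤ supW X f w :=
  le_csSup (bddAbove_aux hX hpos hvar hsub w hw hall) ⟨x, hx, rfl⟩

private lemma supW_cons (hX : IsSubshift X) (hpos : SeqPos X f)
    {M₁ : ℝ} (hvar : VarBddBy X f 1 M₁) {C : ℝ} (hsub : SubAddWith X f C)
    {a : ℕ} {w' : List ℕ} (hlen : 0 < w'.length) (hall : Allow X (a :: w')) :
    supW X f (a :: w') ≤ Real.exp C * (supW X f [a] * supW X f w') := by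
  have halla : Allow X [a] := allow_head hall
  have hallw : Allow X w' := allow_tail hX hall
  apply Real.sSup_le
  · rintro r ⟨x, ⟨hxX, hxc⟩, rfl⟩
    have hsx : shift x ∈ X := shift_mem_of_subshift hX hxX
    have h1 : f 1 x ≤ supW X f [a] :=
      apply_le_supW hX hpos hvar hsub (by simp) halla
        ⟨hxX, mem_cyl_singleton (mem_cyl_cons hxc).1⟩
    have h2 : f w'.length (shift x) ≤ supW X f w' :=
      apply_le_supW hX hpos hvar hsub hlen hallw ⟨hsx, (mem_cyl_cons hxc).2⟩
    have hx1 : 0 < f 1 x := hpos 1 one_pos x hxX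
    have hx2 : 0 < f w'.length (shift x) := hpos _ hlen _ hsx
    calc f (a :: w').length x = f (1 + w'.length) x := by rw [List.length_cons, Nat.add_comm]
      _ ≤ Real.exp C * (f 1 x * f w'.length (shift^[1] x)) :=
          hsub 1 w'.length one_pos hlen x hxX
      _ = Real.exp C * (f 1 x * f w'.length (shift x)) := by rw [Function.iterate_one]
      _ ≤ Real.exp C * (supW X f [a] * supW X f w') := by
          refine mul_le_mul_of_nonneg_left ?_ (Real.exp_nonneg C)
          exact mul_le_mul h1 h2 hx2.le (le_trans hx1.le h1)
  · exact mul_nonneg (Real.exp_nonneg C)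
      (mul_nonneg (supW_nonneg hpos (by simp)) (supW_nonneg hpos hlen))

private lemma ZA_le_Z1 :
    (∑' a : {a : ℕ // Allow X [a]}, ENNReal.ofReal (supW X f [a.1])) ≤ Zn X f 1 := by
  have hinj : Function.Injective
      (fun a : {a : ℕ // Allow X [a]} =>
        (⟨[a.1], rfl, a.2⟩ : {w : List ℕ // w.length = 1 ∧ Allow X w})) := by
    intro a b h
    have := congrArg (fun w => w.1) h
    simp at this
    exact Subtype.ext this
  exact ENNReal.tsum_comp_le_tsum_of_injective hinj
    (fun w : {w : List ℕ // w.length = 1 ∧ Allow X w} => ENNReal.ofReal (supW X f w.1))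

private lemma Zn_succ (hX : IsSubshift X) (hpos : SeqPos X f)
    {M₁ : ℝ} (hvar : VarBddBy X f 1 M₁) {C : ℝ} (hsub : SubAddWith X f C)
    (n : ℕ) (hn : 0 < n) :
    Zn X f (n + 1) ≤ ENNReal.ofReal (Real.exp C) *
      ((∑' a : {a : ℕ // Allow X [a]}, ENNReal.ofReal (supW X f [a.1])) * Zn X f n) := by
  classical
  set A := {a : ℕ // Allow X [a]}
  set Wn := {w : List ℕ // w.length = n ∧ Allow X w}
  set Wn1 := {w : List ℕ // w.length = n + 1 ∧ Allow X w}
  have hcons : ∀ w : Wn1, w.1.headI :: w.1.tail = w.1 := by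
    rintro ⟨w, hw, hall⟩
    cases w with
    | nil => simp at hw
    | cons a t => rfl
  have hlentail : ∀ w : Wn1, w.1.tail.length = n := by
    intro w
    have := w.2.1
    simp [List.length_tail, this]
  have hallhead : ∀ w : Wn1, Allow X [w.1.headI] := by
    intro w
    have h := w.2.2
    rw [← hcons w] at h
    exact allow_head h
  have halltail : ∀ w : Wn1, Allow X w.1.tail := by
    intro w
    have h := w.2.2
    rw [← hcons w] at h
    exact allow_tail hX h
  set Φ : Wn1 → A × Wn := fun w =>
    (⟨w.1.headI, hallhead w⟩, ⟨w.1.tail, hlentail w, halltail w⟩) with hΦ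
  have hinj : Function.Injective Φ := by
    intro w w' h
    have h1 : w.1.headI = w'.1.headI := congrArg (fun q => q.1.1) h
    have h2 : w.1.tail = w'.1.tail := congrArg (fun q => q.2.1) h
    apply Subtype.ext
    rw [← hcons w, ← hcons w', h1, h2]
  set G : A × Wn → ℝ≥0∞ := fun q =>
    ENNReal.ofReal (supW X f [q.1.1]) * ENNReal.ofReal (supW X f q.2.1) with hG
  have hterm : ∀ w : Wn1,
      ENNReal.ofReal (supW X f w.1) ≤ ENNReal.ofReal (Real.exp C) * G (Φ w) := by
    intro w
    have hlen : 0 < w.1.tail.length := by rw [hlentail w]; exact hn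
    have hallc : Allow X (w.1.headI :: w.1.tail) := by rw [hcons w]; exact w.2.2
    have hle : supW X f w.1 ≤
        Real.exp C * (supW X f [w.1.headI] * supW X f w.1.tail) := by
      conv_lhs => rw [← hcons w]
      exact supW_cons hX hpos hvar hsub hlen hallc
    calc ENNReal.ofReal (supW X f w.1)
        ≤ ENNReal.ofReal (Real.exp C * (supW X f [w.1.headI] * supW X f w.1.tail)) :=
          ENNReal.ofReal_le_ofReal hle
      _ = ENNReal.ofReal (Real.exp C) * G (Φ w) := by
          rw [ENNReal.ofReal_mul (Real.exp_nonneg C),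
            ENNReal.ofReal_mul (supW_nonneg hpos (by simp))]
  calc Zn X f (n + 1) = ∑' w : Wn1, ENNReal.ofReal (supW X f w.1) := rfl
    _ ≤ ∑' w : Wn1, ENNReal.ofReal (Real.exp C) * G (Φ w) := ENNReal.tsum_le_tsum hterm
    _ = ENNReal.ofReal (Real.exp C) * ∑' w : Wn1, G (Φ w) := ENNReal.tsum_mul_left
    _ ≤ ENNReal.ofReal (Real.exp C) * ∑' q : A × Wn, G q := by
        exact mul_le_mul_right (ENNReal.tsum_comp_le_tsum_of_injective hinj G) _
    _ = ENNReal.ofReal (Real.exp C) *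
        ((∑' a : A, ENNReal.ofReal (supW X f [a.1])) * Zn X f n) := by
        congr 1
        calc ∑' q : A × Wn, G q
            = ∑' a : A, ∑' u : Wn,
              ENNReal.ofReal (supW X f [a.1]) * ENNReal.ofReal (supW X f u.1) :=
              ENNReal.tsum_prod (f := fun (a : A) (u : Wn) =>
                ENNReal.ofReal (supW X f [a.1]) * ENNReal.ofReal (supW X f u.1))
          _ = ∑' a : A, ENNReal.ofReal (supW X f [a.1]) * Zn X f n :=
              tsum_congr fun a => ENNReal.tsum_mul_left
          _ = (∑' a : A, ENNReal.ofReal (supW X f [a.1])) * Zn X f n :=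
              ENNReal.tsum_mul_right

private lemma glue_top (hpos : SeqPos X f) {Dnm : ℕ → ℕ → ℝ} {p : ℕ}
    (hD : D2With X f Dnm p) {m : ℕ} (hm : 0 < m) (htop : Zn X f m = ⊤) :
    ∃ m', 2 * m ≤ m' ∧ m' ≤ 2 * m + p ∧ Zn X f m' = ⊤ := by
  classical
  set Wm := {w : List ℕ // w.length = m ∧ Allow X w}
  set g : Wm → ℝ≥0∞ := fun u => ENNReal.ofReal (supW X f u.1) with hg
  have hchoice : ∀ u v : Wm, ∃ w : List ℕ, w.length ≤ p ∧ Allow X (u.1 ++ w ++ v.1) ∧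
      Dnm u.1.length v.1.length * (supW X f u.1 * supW X f v.1) ≤
        supW X f (u.1 ++ w ++ v.1) := by
    intro u v
    exact hD.2 u.1 v.1 (by rw [u.2.1]; exact hm) (by rw [v.2.1]; exact hm) u.2.2 v.2.2
  choose wf hwlen hwall hwsup using hchoice
  set Ω := Σ k : Fin (p + 1), {w : List ℕ // w.length = 2 * m + k.1 ∧ Allow X w}
  have hlen : ∀ q : Wm × Wm,
      (q.1.1 ++ wf q.1 q.2 ++ q.2.1).length = 2 * m + (wf q.1 q.2).length := by
    intro q
    have h1 := q.1.2.1
    have h2 := q.2.2.1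
    simp [List.length_append, h1, h2]
    omega
  set Φ : Wm × Wm → Ω := fun q =>
    ⟨⟨(wf q.1 q.2).length, Nat.lt_succ_of_le (hwlen q.1 q.2)⟩,
      ⟨q.1.1 ++ wf q.1 q.2 ++ q.2.1, hlen q, hwall q.1 q.2⟩⟩ with hΦ
  set G : Ω → ℝ≥0∞ := fun ω => ENNReal.ofReal (supW X f ω.2.1) with hG
  have hinj : Function.Injective Φ := by
    intro q q' h
    have hl : q.1.1 ++ wf q.1 q.2 ++ q.2.1 = q'.1.1 ++ wf q'.1 q'.2 ++ q'.2.1 :=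
      congrArg (fun ω : Ω => ω.2.1) h
    have hvlen : q.2.1.length = q'.2.1.length := by rw [q.2.2.1, q'.2.2.1]
    obtain ⟨huw, hv⟩ := List.append_inj' hl hvlen
    have hulen : q.1.1.length = q'.1.1.length := by rw [q.1.2.1, q'.1.2.1]
    obtain ⟨hu, -⟩ := List.append_inj huw hulen
    exact Prod.ext (Subtype.ext hu) (Subtype.ext hv)
  have hterm : ∀ q : Wm × Wm,
      ENNReal.ofReal (Dnm m m) * (g q.1 * g q.2) ≤ G (Φ q) := by
    intro q
    have h1 : 0 ≤ supW X f q.1.1 := supW_nonneg hpos (by rw [q.1.2.1]; exact hm)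
    have h2 : 0 ≤ supW X f q.2.1 := supW_nonneg hpos (by rw [q.2.2.1]; exact hm)
    have hsup := hwsup q.1 q.2
    rw [q.1.2.1, q.2.2.1] at hsup
    calc ENNReal.ofReal (Dnm m m) * (g q.1 * g q.2)
        = ENNReal.ofReal (Dnm m m * (supW X f q.1.1 * supW X f q.2.1)) := by
          rw [ENNReal.ofReal_mul (hD.1.1 m m).le, ENNReal.ofReal_mul h1]
      _ ≤ ENNReal.ofReal (supW X f (q.1.1 ++ wf q.1 q.2 ++ q.2.1)) :=
          ENNReal.ofReal_le_ofReal hsup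
      _ = G (Φ q) := rfl
  have hD0 : ENNReal.ofReal (Dnm m m) ≠ 0 := by
    simp only [ne_eq, ENNReal.ofReal_eq_zero, not_le]
    exact hD.1.1 m m
  have key : (⊤ : ℝ≥0∞) ≤ ∑' ω : Ω, G ω := by
    calc (⊤ : ℝ≥0∞) = ENNReal.ofReal (Dnm m m) * (Zn X f m * Zn X f m) := by
          rw [htop, ENNReal.top_mul (by simp), ENNReal.mul_top hD0]
      _ = ∑' q : Wm × Wm, ENNReal.ofReal (Dnm m m) * (g q.1 * g q.2) := by
          rw [ENNReal.tsum_mul_left]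
          congr 1
          calc Zn X f m * Zn X f m = ∑' u : Wm, g u * Zn X f m :=
                ENNReal.tsum_mul_right.symm
            _ = ∑' u : Wm, ∑' v : Wm, g u * g v :=
                tsum_congr fun u => ENNReal.tsum_mul_left.symm
            _ = ∑' q : Wm × Wm, g q.1 * g q.2 := ENNReal.tsum_prod.symm
      _ ≤ ∑' q : Wm × Wm, G (Φ q) := ENNReal.tsum_le_tsum hterm
      _ ≤ ∑' ω : Ω, G ω := ENNReal.tsum_comp_le_tsum_of_injective hinj G
  have hsum : ∑' ω : Ω, G ω = ⊤ := top_le_iff.mp key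
  have hsig : ∑' ω : Ω, G ω = ∑ k : Fin (p + 1), Zn X f (2 * m + k.1) := by
    rw [ENNReal.tsum_sigma' G, tsum_fintype]
    rfl
  rw [hsig] at hsum
  obtain ⟨k, -, hk⟩ := ENNReal.sum_eq_top.mp hsum
  exact ⟨2 * m + k.1, Nat.le_add_right _ _, by omega, hk⟩

end Aux

/-- For a sequence with tempered variation satisfying (C1) and (D2) on a
subshift on a countable alphabet, `P(F) < ∞` if and only if `Z₁(F) < ∞`. -/
theorem pressure_finite_iff_Z1_finite (X : Set FullShift) (hX : IsSubshift X)
    (f : ℕ → FullShift → ℝ) (hpos : SeqPos X f) (hcont : SeqCont X f)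
    (htemp : Tempered X f) (hC1 : CondC1 X f) (hD2 : CondD2 X f) :
    pressure X f ≠ ⊤ ↔ Zn X f 1 ≠ ⊤ := by
  obtain ⟨Mseq, hMseq, -⟩ := htemp
  have hvar : VarBddBy X f 1 (Mseq 1) := (hMseq 1 one_pos).2
  obtain ⟨C, hC0, hsub⟩ := hC1
  obtain ⟨Dnm, p, hD⟩ := hD2
  constructor
  · intro hP
    by_contra hZ
    have hunb : ∀ j : ℕ, ∃ n, j ≤ n ∧ 0 < n ∧ Zn X f n = ⊤ := by
      intro j
      induction j with
      | zero => exact ⟨1, Nat.zero_le _, one_pos, hZ⟩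
      | succ j ih =>
        obtain ⟨n, hjn, hn, ht⟩ := ih
        obtain ⟨m', h1, -, h3⟩ := glue_top hpos hD hn ht
        exact ⟨m', by omega, by omega, h3⟩
    have htop : (⊤ : EReal) ≤ pressure X f := by
      apply le_limsup_of_frequently_le'
      rw [Filter.frequently_atTop]
      intro j
      obtain ⟨n, hjn, hn, ht⟩ := hunb j
      refine ⟨n, hjn, ?_⟩
      have hpos' : (0 : EReal) < ((n : ℝ)⁻¹ : EReal) :=
        EReal.coe_pos.mpr (inv_pos.mpr (by exact_mod_cast hn))
      rw [ht, ENNReal.log_top, EReal.mul_top_of_pos hpos']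
    exact hP (top_le_iff.mp htop)
  · intro hZ
    set ZA := ∑' a : {a : ℕ // Allow X [a]}, ENNReal.ofReal (supW X f [a.1]) with hZA
    set L := (ENNReal.ofReal (Real.exp C) * Zn X f 1) ⊔ (Zn X f 1 ⊔ 1) with hL
    have hZle : ∀ n, 1 ≤ n → Zn X f n ≤ L ^ n := by
      intro n hn
      induction n, hn using Nat.le_induction with
      | base => rw [pow_one]; exact le_sup_of_le_right le_sup_left
      | succ n hn ih =>
        calc Zn X f (n + 1) ≤ ENNReal.ofReal (Real.exp C) * (ZA * Zn X f n) :=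
              Zn_succ hX hpos hvar hsub n hn
          _ ≤ ENNReal.ofReal (Real.exp C) * (Zn X f 1 * L ^ n) :=
              mul_le_mul_right (mul_le_mul' ZA_le_Z1 ih) _
          _ = (ENNReal.ofReal (Real.exp C) * Zn X f 1) * L ^ n := (mul_assoc _ _ _).symm
          _ ≤ L * L ^ n := mul_le_mul_left le_sup_left _
          _ = L ^ (n + 1) := by rw [pow_succ, mul_comm]
    have hLlt : L < ⊤ := by
      rw [hL]
      apply max_lt
      · exact ENNReal.mul_lt_top ENNReal.ofReal_lt_top (lt_top_iff_ne_top.mpr hZ)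
      · exact max_lt (lt_top_iff_ne_top.mpr hZ) ENNReal.one_lt_top
    have hev : ∀ᶠ n : ℕ in atTop,
        ((n : ℝ)⁻¹ : EReal) * ENNReal.log (Zn X f n) ≤ ENNReal.log L := by
      filter_upwards [eventually_ge_atTop 1] with n hn
      have h1 : ENNReal.log (Zn X f n) ≤ (n : EReal) * ENNReal.log L := by
        rw [← ENNReal.log_pow]; exact ENNReal.log_monotone (hZle n hn)
      have hnn : (0 : ℝ) ≤ (n : ℝ)⁻¹ := by positivity
      calc ((n : ℝ)⁻¹ : EReal) * ENNReal.log (Zn X f n)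
          ≤ ((n : ℝ)⁻¹ : EReal) * ((n : EReal) * ENNReal.log L) :=
            mul_le_mul_of_nonneg_left h1 (EReal.coe_nonneg.mpr hnn)
        _ = ENNReal.log L := by
            rw [← mul_assoc]
            have hone : ((n : ℝ)⁻¹ : EReal) * (n : EReal) = (1 : EReal) := by
              have h : ((n : ℝ)⁻¹ * (n : ℝ)) = 1 := inv_mul_cancel₀ (by positivity)
              have h2 : ((n : ℝ)⁻¹ : EReal) * (((n : ℝ) : EReal)) = 1 := by
                rw [← EReal.coe_inv, ← EReal.coe_mul, h, EReal.coe_one]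
              exact h2
            rw [hone, one_mul]
    have hple : pressure X f ≤ ENNReal.log L :=
      Filter.limsup_le_of_le (by isBoundedDefault) hev
    exact (hple.trans_lt (ENNReal.log_lt_top_iff.mpr hLlt)).ne

end CSS
end

section
/- Let F be a Bowen sequence on a subshift X on a countable alphabet satisfying (C1) and (C2). If F fails to satisfy the finiteness condition (C3), then P(F) = ∞. -/
open Filter Topology MeasureTheory
open scoped ENNReal

namespace CSS

section Aux

variable {X : Set FullShift} {f : ℕ → FullShift → ℝ} {M C D : ℝ} {p : ℕ}

lemma shift_iter_apply (n : ℕ) (x : FullShift) (i : ℕ) : shift^[n] x i = x (i + n) := by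
  induction n generalizing x i with
  | zero => rfl
  | succ n ih =>
    rw [Function.iterate_succ_apply, ih]
    show x (i + n + 1) = x (i + (n + 1))
    congr 1

lemma iter_mem (hX : IsSubshift X) {x : FullShift} (hx : x ∈ X) (n : ℕ) : shift^[n] x ∈ X := by
  induction n with
  | zero => exact hx
  | succ n ih => rw [Function.iterate_succ_apply']; exact hX.2 ⟨_, ih, rfl⟩

lemma cyl_left {u t : List ℕ} {x : FullShift} (hx : x ∈ cyl (u ++ t)) : x ∈ cyl u := by
  intro i
  have h : (i : ℕ) < (u ++ t).length := by
    simp only [List.length_append]; omega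
  have h2 := hx ⟨i, h⟩
  simpa [List.get_eq_getElem, List.getElem_append_left i.2] using h2

lemma cyl_right {u t : List ℕ} {x : FullShift} (hx : x ∈ cyl (u ++ t)) :
    shift^[u.length] x ∈ cyl t := by
  intro i
  have h : u.length + (i : ℕ) < (u ++ t).length := by
    simp only [List.length_append]; omega
  have h2 := hx ⟨u.length + i, h⟩
  rw [shift_iter_apply]
  simp only [List.get_eq_getElem] at h2 ⊢
  rw [List.getElem_append_right (by omega)] at h2
  simp only [Nat.add_sub_cancel_left] at h2
  rw [Nat.add_comm]
  exact h2

lemma allow_middle (hX : IsSubshift X) {u w v : List ℕ} (h : Allow X (u ++ w ++ v)) :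
    Allow X w := by
  obtain ⟨x, hxX, hxc⟩ := h
  rw [List.append_assoc] at hxc
  exact ⟨shift^[u.length] x, iter_mem hX hxX _, cyl_left (cyl_right hxc)⟩

lemma allow_left (hX : IsSubshift X) {u t : List ℕ} (h : Allow X (u ++ t)) : Allow X u := by
  obtain ⟨x, hxX, hxc⟩ := h
  exact ⟨x, hxX, cyl_left hxc⟩

lemma allow_right (hX : IsSubshift X) {u t : List ℕ} (h : Allow X (u ++ t)) : Allow X t := by
  obtain ⟨x, hxX, hxc⟩ := h
  exact ⟨shift^[u.length] x, iter_mem hX hxX _, cyl_right hxc⟩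

lemma mem_cyl_of_agree {w : List ℕ} {x y : FullShift} (hx : x ∈ cyl w) (hy : y ∈ cyl w)
    (i : ℕ) (hi : i < w.length) : x i = y i := by
  rw [hx ⟨i, hi⟩, hy ⟨i, hi⟩]

lemma supW_bddAbove (hpos : SeqPos X f) (hBow : BowenWith X f M)
    {w : List ℕ} (hw : 0 < w.length) (hA : Allow X w) :
    BddAbove (f w.length '' (X ∩ cyl w)) := by
  obtain ⟨y, hyX, hyc⟩ := hA
  refine ⟨M * f w.length y, ?_⟩
  rintro b ⟨x, ⟨hxX, hxc⟩, rfl⟩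
  exact hBow w.length hw x hxX y hyX (fun i hi => mem_cyl_of_agree hxc hyc i hi)

lemma le_supW (hpos : SeqPos X f) (hBow : BowenWith X f M)
    {w : List ℕ} (hw : 0 < w.length) (hA : Allow X w) {x : FullShift}
    (hx : x ∈ X ∩ cyl w) : f w.length x ≤ supW X f w :=
  le_csSup (supW_bddAbove hpos hBow hw hA) ⟨x, hx, rfl⟩

lemma supW_pos (hpos : SeqPos X f) (hBow : BowenWith X f M)
    {w : List ℕ} (hw : 0 < w.length) (hA : Allow X w) : 0 < supW X f w := by
  obtain ⟨y, hyX, hyc⟩ := hA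
  exact lt_of_lt_of_le (hpos _ hw y hyX) (le_supW hpos hBow hw ⟨y, hyX, hyc⟩ ⟨hyX, hyc⟩)

lemma connector_ge (hX : IsSubshift X) (hpos : SeqPos X f)
    (hBow : BowenWith X f M) (hC1 : SubAddWith X f C)
    {u w v : List ℕ} (hu : 0 < u.length) (hw : 0 < w.length) (hv : 0 < v.length)
    (hA : Allow X (u ++ w ++ v)) {D : ℝ} (hD : 0 < D)
    (hineq : D * (supW X f u * supW X f v) ≤ supW X f (u ++ w ++ v)) :
    D / (Real.exp C * Real.exp C) ≤ supW X f w := by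
  have hAu : Allow X u := allow_left hX (allow_left hX hA)
  have hAw : Allow X w := allow_middle hX hA
  have hAv : Allow X v := allow_right hX hA
  have hsu := supW_pos hpos hBow hu hAu
  have hsw := supW_pos hpos hBow hw hAw
  have hsv := supW_pos hpos hBow hv hAv
  have key : supW X f (u ++ w ++ v) ≤
      Real.exp C * Real.exp C * (supW X f u * (supW X f w * supW X f v)) := by
    apply Real.sSup_le
    · rintro b ⟨x, ⟨hxX, hxc⟩, rfl⟩
      have hlen : (u ++ w ++ v).length = u.length + (w.length + v.length) := by
        simp [List.length_append, Nat.add_assoc]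
      have hxu : x ∈ X ∩ cyl u := ⟨hxX, cyl_left (cyl_left hxc)⟩
      have hxc' : x ∈ cyl (u ++ (w ++ v)) := by rwa [← List.append_assoc]
      have hsx : shift^[u.length] x ∈ X := iter_mem hX hxX _
      have hxw : shift^[u.length] x ∈ X ∩ cyl w := ⟨hsx, cyl_left (cyl_right hxc')⟩
      have hxv : shift^[w.length] (shift^[u.length] x) ∈ X ∩ cyl v :=
        ⟨iter_mem hX hsx _, cyl_right (cyl_right hxc')⟩
      have h1 : f ((u ++ w ++ v).length) x ≤
          Real.exp C * (f u.length x * f (w.length + v.length) (shift^[u.length] x)) := by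
        rw [hlen]
        exact hC1 u.length (w.length + v.length) hu (by omega) x hxX
      have h2 : f (w.length + v.length) (shift^[u.length] x) ≤
          Real.exp C * (f w.length (shift^[u.length] x) *
            f v.length (shift^[w.length] (shift^[u.length] x))) :=
        hC1 w.length v.length hw hv _ hsx
      have p1 : 0 < f u.length x := hpos _ hu x hxX
      have p2 : 0 < f w.length (shift^[u.length] x) := hpos _ hw _ hsx
      have p3 : 0 < f v.length (shift^[w.length] (shift^[u.length] x)) := hpos _ hv _ hxv.1
      have b1 : f u.length x ≤ supW X f u := le_supW hpos hBow hu hAu hxu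
      have b2 : f w.length (shift^[u.length] x) ≤ supW X f w := le_supW hpos hBow hw hAw hxw
      have b3 : f v.length (shift^[w.length] (shift^[u.length] x)) ≤ supW X f v :=
        le_supW hpos hBow hv hAv hxv
      have hec : (0:ℝ) < Real.exp C := Real.exp_pos C
      have p4 : 0 < f (w.length + v.length) (shift^[u.length] x) :=
        hpos _ (by omega) _ hsx
      calc f ((u ++ w ++ v).length) x
          ≤ Real.exp C * (f u.length x * f (w.length + v.length) (shift^[u.length] x)) := h1
        _ ≤ Real.exp C * (supW X f u * (Real.exp C * (supW X f w * supW X f v))) := by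
            refine mul_le_mul_of_nonneg_left ?_ hec.le
            exact mul_le_mul b1 (le_trans h2 (mul_le_mul_of_nonneg_left
              (mul_le_mul b2 b3 p3.le hsw.le) hec.le)) p4.le hsu.le
        _ = Real.exp C * Real.exp C * (supW X f u * (supW X f w * supW X f v)) := by ring
    · positivity
  have h3 : D * (supW X f u * supW X f v) ≤
      (Real.exp C * Real.exp C * supW X f w) * (supW X f u * supW X f v) := by
    calc D * (supW X f u * supW X f v) ≤ supW X f (u ++ w ++ v) := hineq
    _ ≤ Real.exp C * Real.exp C * (supW X f u * (supW X f w * supW X f v)) := key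
    _ = (Real.exp C * Real.exp C * supW X f w) * (supW X f u * supW X f v) := by ring
  have h4 : D ≤ Real.exp C * Real.exp C * supW X f w :=
    le_of_mul_le_mul_right h3 (by positivity)
  rw [div_le_iff₀ (by positivity)]
  linarith [h4]

lemma Zn_key (hpos : SeqPos X f) (hBow : BowenWith X f M) (hD : 0 < D)
    (hC2 : C2With X f D p) (n m : ℕ) (hn : 1 ≤ n) (hm : 1 ≤ m) :
    ENNReal.ofReal D * (Zn X f n * Zn X f m) ≤ ∑ k : Fin (p + 1), Zn X f (n + m + k) := by
  classical
  set A := {w : List ℕ // w.length = n ∧ Allow X w} with hA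
  set B := {w : List ℕ // w.length = m ∧ Allow X w} with hB
  have H : ∀ (a : A) (b : B),
      ∃ w, w.length ≤ p ∧ Allow X (a.1 ++ w ++ b.1) ∧
        D * (supW X f a.1 * supW X f b.1) ≤ supW X f (a.1 ++ w ++ b.1) := fun a b =>
    hC2 a.1 b.1 (by rw [a.2.1]; omega) (by rw [b.2.1]; omega) a.2.2 b.2.2
  choose g hg1 hg2 hg3 using H
  let T := Σ k : Fin (p + 1), {z : List ℕ // z.length = n + m + (k : ℕ) ∧ Allow X z}
  let ι : A × B → T := fun ab =>
    ⟨⟨(g ab.1 ab.2).length, by have := hg1 ab.1 ab.2; omega⟩,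
      ⟨ab.1.1 ++ g ab.1 ab.2 ++ ab.2.1,
        ⟨by simp [List.length_append, ab.1.2.1, ab.2.2.1]; omega, hg2 ab.1 ab.2⟩⟩⟩
  have hinj : Function.Injective ι := by
    rintro ⟨a1, b1⟩ ⟨a2, b2⟩ h
    have hk : (g a1 b1).length = (g a2 b2).length := by
      have := congrArg (fun s : T => (s.1 : ℕ)) h
      simpa [ι] using this
    have hz : a1.1 ++ g a1 b1 ++ b1.1 = a2.1 ++ g a2 b2 ++ b2.1 := by
      have := congrArg (fun s : T => (s.2.1 : List ℕ)) h
      simpa [ι] using this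
    have ha : a1.1 = a2.1 := by
      have h1 : (a1.1 ++ (g a1 b1 ++ b1.1)).take n = (a2.1 ++ (g a2 b2 ++ b2.1)).take n := by
        rw [← List.append_assoc, ← List.append_assoc, hz]
      rwa [List.take_left' a1.2.1, List.take_left' a2.2.1] at h1
    have hb : b1.1 = b2.1 := by
      have h1 : ((a1.1 ++ g a1 b1) ++ b1.1).drop (n + (g a1 b1).length)
          = ((a2.1 ++ g a2 b2) ++ b2.1).drop (n + (g a1 b1).length) := by rw [hz]
      rwa [List.drop_left' (by simp [a1.2.1]), hk,
        List.drop_left' (by simp [a2.2.1])] at h1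
    exact Prod.ext (Subtype.ext ha) (Subtype.ext hb)
  have hnnA : ∀ a : A, 0 ≤ supW X f a.1 :=
    fun a => (supW_pos hpos hBow (by rw [a.2.1]; omega) a.2.2).le
  have step1 : ∑' ab : A × B, ENNReal.ofReal (D * (supW X f ab.1.1 * supW X f ab.2.1))
      = ENNReal.ofReal D * (Zn X f n * Zn X f m) := by
    calc ∑' ab : A × B, ENNReal.ofReal (D * (supW X f ab.1.1 * supW X f ab.2.1))
        = ∑' (a : A) (b : B), ENNReal.ofReal D *
            (ENNReal.ofReal (supW X f a.1) * ENNReal.ofReal (supW X f b.1)) := by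
          rw [ENNReal.tsum_prod']
          congr 1; funext a; congr 1; funext b
          rw [ENNReal.ofReal_mul hD.le, ENNReal.ofReal_mul (hnnA a)]
      _ = ENNReal.ofReal D * (Zn X f n * Zn X f m) := by
          simp only [ENNReal.tsum_mul_left, ENNReal.tsum_mul_right, Zn]
          rfl
  have step2 : ∀ ab : A × B,
      (fun ab : A × B => ENNReal.ofReal (D * (supW X f ab.1.1 * supW X f ab.2.1))) ab ≤
      (fun s : T => ENNReal.ofReal (supW X f s.2.1)) (ι ab) :=
    fun ab => ENNReal.ofReal_le_ofReal (hg3 ab.1 ab.2)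
  have step3 : ∑' ab : A × B, ENNReal.ofReal (D * (supW X f ab.1.1 * supW X f ab.2.1)) ≤
      ∑' s : T, ENNReal.ofReal (supW X f s.2.1) :=
    Summable.tsum_le_tsum_of_inj ι hinj (fun _ _ => zero_le) step2
      ENNReal.summable ENNReal.summable
  have step4 : ∑' s : T, ENNReal.ofReal (supW X f s.2.1)
      = ∑ k : Fin (p + 1), Zn X f (n + m + k) := by
    rw [ENNReal.tsum_sigma', tsum_fintype]
    rfl
  calc ENNReal.ofReal D * (Zn X f n * Zn X f m)
      = ∑' ab : A × B, ENNReal.ofReal (D * (supW X f ab.1.1 * supW X f ab.2.1)) := step1.symm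
    _ ≤ ∑' s : T, ENNReal.ofReal (supW X f s.2.1) := step3
    _ = ∑ k : Fin (p + 1), Zn X f (n + m + k) := step4

lemma exists_Zn_top_ge (hpos : SeqPos X f) (hBow : BowenWith X f M) (hD : 0 < D)
    (hC2 : C2With X f D p) {k : ℕ} (hk : 1 ≤ k) (htop : Zn X f k = ⊤) :
    ∃ k', k + 1 ≤ k' ∧ Zn X f k' = ⊤ := by
  have h := Zn_key hpos hBow hD hC2 k k hk hk
  rw [htop] at h
  have hl : (⊤ : ℝ≥0∞) ≤ ∑ j : Fin (p + 1), Zn X f (k + k + j) := by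
    refine le_trans (le_of_eq ?_) h
    rw [ENNReal.top_mul ENNReal.top_ne_zero, ENNReal.mul_top
      (by simp [ENNReal.ofReal_eq_zero]; linarith)]
  have hsum : ∑ j : Fin (p + 1), Zn X f (k + k + j) = ⊤ := top_le_iff.mp hl
  obtain ⟨j, _, hj⟩ := ENNReal.sum_eq_top.mp hsum
  exact ⟨k + k + j, by omega, hj⟩

lemma pressure_eq_top_of_Zn_top (hpos : SeqPos X f) (hBow : BowenWith X f M) (hD : 0 < D)
    (hC2 : C2With X f D p) {k : ℕ} (hk : 1 ≤ k) (htop : Zn X f k = ⊤) :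
    pressure X f = ⊤ := by
  have main : ∀ N : ℕ, ∃ n, N ≤ n ∧ 1 ≤ n ∧ Zn X f n = ⊤ := by
    intro N
    induction N with
    | zero => exact ⟨k, Nat.zero_le k, hk, htop⟩
    | succ N ih =>
      obtain ⟨n, hNn, hn1, hnt⟩ := ih
      obtain ⟨k', hk', ht'⟩ := exists_Zn_top_ge hpos hBow hD hC2 hn1 hnt
      exact ⟨k', by omega, by omega, ht'⟩
  rw [pressure, ← top_le_iff]
  apply le_limsup_of_frequently_le'
  rw [frequently_atTop]
  intro N
  obtain ⟨n, hNn, hn1, hnt⟩ := main N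
  refine ⟨n, hNn, ?_⟩
  rw [hnt, ENNReal.log_top, EReal.mul_top_of_pos]
  exact EReal.coe_pos.mpr (inv_pos.mpr (by exact_mod_cast hn1))

lemma finite_heavy (hZ : ∀ k, 1 ≤ k → Zn X f k ≠ ⊤) (p : ℕ) {ε : ℝ} (hε : 0 < ε) :
    {w : List ℕ | Allow X w ∧ 0 < w.length ∧ w.length ≤ p ∧ ε ≤ supW X f w}.Finite := by
  have main : ∀ k, 1 ≤ k →
      {w : List ℕ | w.length = k ∧ Allow X w ∧ ε ≤ supW X f w}.Finite := by
    intro k hk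
    have h := ENNReal.finite_const_le_of_tsum_ne_top
      (a := fun w : {w : List ℕ // w.length = k ∧ Allow X w} =>
        ENNReal.ofReal (supW X f w.1)) (hZ k hk)
      (ε := ENNReal.ofReal ε) (by simp [ENNReal.ofReal_eq_zero]; linarith)
    have himg := h.image (fun w => w.1)
    apply himg.subset
    rintro w ⟨hw1, hw2, hw3⟩
    exact ⟨⟨w, hw1, hw2⟩, ENNReal.ofReal_le_ofReal hw3, rfl⟩
  have hsub : {w : List ℕ | Allow X w ∧ 0 < w.length ∧ w.length ≤ p ∧ ε ≤ supW X f w} ⊆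
      ⋃ k ∈ Finset.Icc 1 p, {w : List ℕ | w.length = k ∧ Allow X w ∧ ε ≤ supW X f w} := by
    rintro w ⟨h1, h2, h3, h4⟩
    exact Set.mem_biUnion (Finset.mem_Icc.mpr ⟨h2, h3⟩) ⟨rfl, h1, h4⟩
  exact (Set.Finite.biUnion (Finset.Icc 1 p).finite_toSet
    (fun k hk => main k (Finset.mem_Icc.mp hk).1)).subset hsub

end Aux

/-- A Bowen sequence on a countable-alphabet subshift satisfying (C1) and
(C2) but failing the finiteness condition (C3) has infinite pressure. -/
theorem pressure_top_of_not_C3 (X : Set FullShift) (hX : IsSubshift X)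
    (f : ℕ → FullShift → ℝ) (hpos : SeqPos X f) (hcont : SeqCont X f)
    (hBow : Bowen X f) (hC1 : CondC1 X f) (hC2 : CondC2 X f) (hC3 : ¬ CondC3 X f) :
    pressure X f = ⊤ := by
  obtain ⟨M, hM, hBow⟩ := hBow
  obtain ⟨C, hC0, hC1'⟩ := hC1
  obtain ⟨D, hD, p, hC2'⟩ := hC2
  by_cases htop : ∃ k, 1 ≤ k ∧ Zn X f k = ⊤
  · obtain ⟨k, hk, ht⟩ := htop
    exact pressure_eq_top_of_Zn_top hpos hBow hD hC2' hk ht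
  · exfalso
    push_neg at htop
    have hZ : ∀ k, 1 ≤ k → Zn X f k ≠ ⊤ := htop
    have hε : 0 < D / (Real.exp C * Real.exp C) := div_pos hD (by positivity)
    have hfin := finite_heavy hZ p hε
    apply hC3
    refine ⟨D, hD, p, insert [] hfin.toFinset, ?_, ?_⟩
    · intro w hw
      rcases Finset.mem_insert.mp hw with h | h
      · simp [h]
      · exact ((Set.Finite.mem_toFinset _).mp h).2.2.1
    · intro u v hu hv hAu hAv
      obtain ⟨w, hwp, hall, hineq⟩ := hC2' u v hu hv hAu hAv
      refine ⟨w, ?_, hall, hineq⟩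
      rcases Nat.eq_zero_or_pos w.length with h0 | hwpos
      · rw [List.length_eq_zero_iff.mp h0]
        exact Finset.mem_insert_self _ _
      · refine Finset.mem_insert.mpr (Or.inr ((Set.Finite.mem_toFinset _).mpr ?_))
        exact ⟨allow_middle hX hall, hwpos, hwp,
          connector_ge hX hpos hBow hC1' hu hwpos hv hall hD hineq⟩

end CSS
end

section
/- Let (X, σ) be a subshift on a countable alphabet and F = {log f_n}_{n≥1} a sequence of continuous functions on X with tempered variation satisfying (C1) and (D2). If P(F) < ∞, then for every σ-invariant Borel probability measure μ on X the limit lim_n (1/n) ∫ log f_n dμ exists in [−∞, ∞), and whenever this limit is > −∞ one has h_μ(σ) + lim_n (1/n) ∫ log f_n dμ ≤ P(F), where h_μ(σ) is the Kolmogorov–Sinai entropy of μ. -/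
open Filter Topology MeasureTheory
open scoped ENNReal

namespace CSS

variable {X : Set FullShift} {f : ℕ → FullShift → ℝ}

lemma length_prefixWord (x : FullShift) (n : ℕ) : (prefixWord x n).length = n := by
  simp [prefixWord]

lemma mem_cyl_prefixWord (x : FullShift) (n : ℕ) : x ∈ cyl (prefixWord x n) := by
  intro i
  rw [List.get_eq_getElem]
  simp [prefixWord, List.get_ofFn]

lemma apply_eq_of_mem_cyl {x : FullShift} {w : List ℕ} (hx : x ∈ cyl w) {i : ℕ}
    (hi : i < w.length) : x i = w.get ⟨i, hi⟩ := hx ⟨i, hi⟩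

lemma eq_of_mem_cyl {w v : List ℕ} (hl : w.length = v.length) {x : FullShift}
    (hw : x ∈ cyl w) (hv : x ∈ cyl v) : w = v := by
  apply List.ext_get hl
  intro i h1 h2
  rw [← apply_eq_of_mem_cyl hw h1, ← apply_eq_of_mem_cyl hv h2]

lemma measurableSet_cyl (w : List ℕ) : MeasurableSet (cyl w) := by
  have : cyl w = ⋂ i : Fin w.length, (fun x : FullShift => x i.1) ⁻¹' {w.get i} := by
    ext x; simp [cyl, Set.mem_iInter]
  rw [this]
  exact MeasurableSet.iInter fun i => (measurable_pi_apply _) (measurableSet_singleton _)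

lemma iUnion_cyl (n : ℕ) : ⋃ w : {w : List ℕ // w.length = n}, cyl w.1 = Set.univ := by
  apply Set.eq_univ_of_forall
  intro x
  exact Set.mem_iUnion.2 ⟨⟨prefixWord x n, length_prefixWord x n⟩, mem_cyl_prefixWord x n⟩

lemma tsum_measure_cyl (μ : Measure FullShift) (n : ℕ) :
    ∑' w : {w : List ℕ // w.length = n}, μ (cyl w.1) = μ Set.univ := by
  rw [← iUnion_cyl n]
  have hd : Pairwise (Function.onFun Disjoint fun w : {w : List ℕ // w.length = n} => cyl w.1) := by
    intro i j hij
    rw [Function.onFun, Set.disjoint_iff_inter_eq_empty]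
    by_contra h
    obtain ⟨x, hxi, hxj⟩ := Set.nonempty_iff_ne_empty.2 h
    exact hij (Subtype.ext (eq_of_mem_cyl (i.2.trans j.2.symm) hxi hxj))
  exact (measure_iUnion hd (fun w => measurableSet_cyl w.1)).symm

/-- supW is positive and an upper bound, under positivity and bounded variation. -/
lemma supW_le {n : ℕ} {M : ℝ} (hpos : ∀ x ∈ X, 0 < f n x) (hvar : VarBddBy X f n M)
    {w : List ℕ} (hw : w.length = n) (hall : Allow X w) :
    (∀ x ∈ X ∩ cyl w, f n x ≤ supW X f w) ∧ 0 < supW X f w := by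
  obtain ⟨y, hyX, hyc⟩ := hall
  have hagree : ∀ x ∈ X ∩ cyl w, ∀ i < n, x i = y i := by
    intro x hx i hi
    rw [apply_eq_of_mem_cyl hx.2 (hw ▸ hi), apply_eq_of_mem_cyl hyc (hw ▸ hi)]
  have hub : ∀ z ∈ f w.length '' (X ∩ cyl w), z ≤ M * f n y := by
    rintro z ⟨x, hx, rfl⟩
    rw [hw]
    exact hvar x hx.1 y hyX (hagree x hx)
  have hbdd : BddAbove (f w.length '' (X ∩ cyl w)) := ⟨M * f n y, hub⟩
  have hmem : f n y ≤ supW X f w := by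
    have : f w.length y ∈ f w.length '' (X ∩ cyl w) := ⟨y, ⟨hyX, hyc⟩, rfl⟩
    simpa [supW, hw] using le_csSup hbdd this
  refine ⟨fun x hx => ?_, lt_of_lt_of_le (hpos y hyX) hmem⟩
  have : f w.length x ∈ f w.length '' (X ∩ cyl w) := ⟨x, hx, rfl⟩
  simpa [supW, hw] using le_csSup hbdd this

lemma supW_of_not_allow {w : List ℕ} (h : ¬ Allow X w) : supW X f w = 0 := by
  have : X ∩ cyl w = ∅ := by
    rw [Set.eq_empty_iff_forall_notMem]; rintro x ⟨h1, h2⟩; exact h ⟨x, h1, h2⟩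
  simp [supW, this, Real.sSup_empty]

lemma ofReal_supW_le_Zn {n : ℕ} {w : List ℕ} (hw : w.length = n) (hall : Allow X w) :
    ENNReal.ofReal (supW X f w) ≤ Zn X f n :=
  ENNReal.le_tsum (⟨w, hw, hall⟩ : {w : List ℕ // w.length = n ∧ Allow X w})

/-- the Zn sum re-indexed over all words of length n. -/
lemma Zn_eq_tsum_len (n : ℕ) :
    Zn X f n = ∑' w : {w : List ℕ // w.length = n}, ENNReal.ofReal (supW X f w.1) := by
  classical
  set F : List ℕ → ℝ≥0∞ := fun w => if w.length = n ∧ Allow X w then ENNReal.ofReal (supW X f w) else 0 with hF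
  have h1 : Zn X f n = ∑' w : {w : List ℕ // w.length = n ∧ Allow X w}, F w.1 := by
    apply tsum_congr; rintro ⟨w, hw⟩; simp [hF, hw]
  have h2 : ∑' w : {w : List ℕ // w.length = n}, ENNReal.ofReal (supW X f w.1)
      = ∑' w : {w : List ℕ // w.length = n}, F w.1 := by
    apply tsum_congr; rintro ⟨w, hw⟩
    by_cases hall : Allow X w
    · simp [hF, hw, hall]
    · simp [hF, hw, hall, supW_of_not_allow hall]
  rw [h1, h2]
  have hs1 : ∑' w : {w : List ℕ // w.length = n ∧ Allow X w}, F w.1 = ∑' w : List ℕ, F w := by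
    apply tsum_subtype_eq_of_support_subset
    intro w hw
    by_contra h
    apply hw
    show F w = 0
    simp only [hF]
    exact if_neg h
  have hs2 : ∑' w : {w : List ℕ // w.length = n}, F w.1 = ∑' w : List ℕ, F w := by
    apply tsum_subtype_eq_of_support_subset
    intro w hw
    by_contra h
    apply hw
    show F w = 0
    simp only [hF]
    rw [if_neg]
    intro ⟨h1, h2⟩; exact h h1
  rw [hs1, hs2]

lemma fekete_div_bound {α : ℕ → ℝ} {C : ℝ} {N : ℕ} (hN : 0 < N)
    (h : ∀ m n, N ≤ m → N ≤ n → α (m + n) ≤ α m + α n + C) {k : ℕ} (hk : N ≤ k) :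
    ∃ D : ℝ, ∀ n, N ≤ n → (α n) / n ≤ (α k + C) / k + D / n := by
  have hk0 : 0 < k := lt_of_lt_of_le hN hk
  set c : ℝ := α k + C with hc
  obtain ⟨B, hB⟩ : ∃ B : ℝ, ∀ r, N ≤ r → r < N + k → α r ≤ B := by
    refine ⟨((Finset.Ico N (N + k)).image α).max' ?_, fun r h1 h2 => ?_⟩
    · exact Finset.Nonempty.image ⟨N, Finset.mem_Ico.2 ⟨le_refl N, by omega⟩⟩ _
    · exact Finset.le_max' _ _ (Finset.mem_image_of_mem α (Finset.mem_Ico.2 ⟨h1, h2⟩))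
  have claim1 : ∀ q r, N ≤ r → α (q * k + r) ≤ q * c + α r := by
    intro q
    induction q with
    | zero => intro r hr; simp
    | succ q ih =>
      intro r hr
      have hidx : (q + 1) * k + r = k + (q * k + r) := by ring
      have h1 : α (k + (q * k + r)) ≤ α k + α (q * k + r) + C :=
        h k (q * k + r) hk (le_trans hr (by omega))
      have h2 := ih r hr
      rw [hidx]
      push_cast
      nlinarith [h1, h2]
  refine ⟨(N + k : ℝ) * |c| / k + |B|, fun n hn => ?_⟩
  have hn0 : 0 < n := lt_of_lt_of_le hN hn
  set q : ℕ := (n - N) / k with hq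
  set r : ℕ := n - q * k with hr
  have hqk : q * k ≤ n - N := Nat.div_mul_le_self _ _
  have hlt : n - N < (q + 1) * k := by
    have := Nat.lt_mul_div_succ (n - N) hk0
    have heq : k * ((n - N) / k + 1) = (q + 1) * k := by rw [hq]; ring
    omega
  have hlt2 : n - N < q * k + k := by
    have e : (q + 1) * k = q * k + k := by ring
    omega
  have hqr : q * k + r = n := by omega
  have hrN : N ≤ r := by omega
  have hrK : r < N + k := by omega
  have hαn : α n ≤ q * c + B := by
    have := claim1 q r hrN
    rw [hqr] at this
    exact le_trans this (by linarith [hB r hrN hrK])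
  -- real estimates
  have hnR : (0:ℝ) < (n:ℝ) := by exact_mod_cast hn0
  have hkR : (0:ℝ) < (k:ℝ) := by exact_mod_cast hk0
  have hq_le : (q:ℝ) * k ≤ n := by
    have : (q * k : ℕ) ≤ n := by omega
    exact_mod_cast this
  have hq_ge : (n:ℝ) - N - k < q * k := by
    have : n < q * k + k + N := by omega
    have := (show ((n:ℕ):ℝ) < ((q * k + k + N : ℕ):ℝ) by exact_mod_cast this)
    push_cast at this
    linarith
  have hqc : (q:ℝ) * c ≤ (n / k) * c + (N + k : ℝ) * |c| / k := by
    rcases le_or_gt 0 c with hc0 | hc0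
    · have h1 : (q:ℝ) ≤ n / k := by rw [le_div_iff₀ hkR]; linarith
      have := mul_le_mul_of_nonneg_right h1 hc0
      have h2 : (0:ℝ) ≤ (N + k : ℝ) * |c| / k := by positivity
      linarith
    · have h1 : (n:ℝ) / k - (N + k : ℝ) / k ≤ q := by
        rw [div_sub_div_same, div_le_iff₀ hkR]
        push_cast
        linarith
      have h2 := mul_le_mul_of_nonpos_right h1 (le_of_lt hc0)
      have h3 : |c| = -c := abs_of_neg hc0
      rw [sub_mul] at h2
      have h4 : (N + k : ℝ) * |c| / k = -((N+k:ℝ)/k * c) := by rw [h3]; ring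
      rw [h4]
      linarith
  have hBabs : B ≤ |B| := le_abs_self B
  have step1 : α n / n ≤ (q * c + B) / n := by gcongr
  refine le_trans step1 ?_
  have step2 : (q * c + B : ℝ) / n ≤ ((n / k) * c + (N + k : ℝ) * |c| / k + |B|) / n := by
    gcongr
  refine le_trans step2 (le_of_eq ?_)
  field_simp
  ring

lemma tail_fekete {α : ℕ → ℝ} {C : ℝ} {N : ℕ} (hN : 0 < N)
    (h : ∀ m n, N ≤ m → N ≤ n → α (m + n) ≤ α m + α n + C) :
    ∃ I : EReal, I ≠ ⊤ ∧ Tendsto (fun n : ℕ => ((α n / n : ℝ) : EReal)) atTop (𝓝 I) := by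
  have hub : ∀ k, N ≤ k → ∀ ε : ℝ, 0 < ε → ∀ᶠ n : ℕ in atTop, α n / n ≤ (α k + C) / k + ε := by
    intro k hk ε hε
    obtain ⟨D, hD⟩ := fekete_div_bound hN h hk
    have hDn : Tendsto (fun n : ℕ => D / n) atTop (𝓝 0) := tendsto_const_div_atTop_nhds_zero_nat D
    filter_upwards [eventually_ge_atTop N, hDn.eventually (eventually_le_nhds hε)] with n h1 h2
    exact le_trans (hD n h1) (by linarith)
  haveI : Nonempty {k : ℕ // N ≤ k} := ⟨⟨N, le_refl N⟩⟩
  set J := ⨅ k : {k : ℕ // N ≤ k}, (((α k.1 + C) / k.1 : ℝ) : EReal) with hJdef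
  by_cases hJ : J = ⊥
  · refine ⟨⊥, bot_ne_top, ?_⟩
    rw [EReal.tendsto_nhds_bot_iff_real]
    intro x
    have hlt : J < ((x - 1 : ℝ) : EReal) := by rw [hJ]; exact EReal.bot_lt_coe _
    rw [hJdef, iInf_lt_iff] at hlt
    obtain ⟨⟨k, hk⟩, hklt⟩ := hlt
    have hklt' : (α k + C) / k < x - 1 := by exact_mod_cast hklt
    filter_upwards [hub k hk 1 one_pos] with n hn
    have : α n / n < x := by linarith
    exact_mod_cast this
  · have hJtop : J ≠ ⊤ := by
      have h1 : J ≤ (((α N + C) / N : ℝ) : EReal) := iInf_le _ (⟨N, le_refl N⟩ : {k : ℕ // N ≤ k})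
      exact (lt_of_le_of_lt h1 (EReal.coe_lt_top _)).ne
    refine ⟨J, hJtop, ?_⟩
    rw [show J = ((J.toReal : ℝ) : EReal) from (EReal.coe_toReal hJtop hJ).symm]
    rw [EReal.tendsto_coe]
    set I := J.toReal with hI
    rw [tendsto_order]
    constructor
    · intro a ha
      have hCn : Tendsto (fun n : ℕ => C / n) atTop (𝓝 0) := tendsto_const_div_atTop_nhds_zero_nat C
      filter_upwards [eventually_ge_atTop N, hCn.eventually (eventually_lt_nhds (by linarith : (0:ℝ) < I - a)), eventually_gt_atTop 0] with n h1 h2 h3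
      have hn0 : (0:ℝ) < n := by exact_mod_cast h3
      have hJle : J ≤ (((α n + C) / n : ℝ) : EReal) := iInf_le _ (⟨n, h1⟩ : {k : ℕ // N ≤ k})
      have hIle : I ≤ (α n + C) / n := by
        rw [show J = ((I : ℝ) : EReal) from (EReal.coe_toReal hJtop hJ).symm] at hJle
        exact_mod_cast hJle
      have : α n / n = (α n + C) / n - C / n := by field_simp; ring
      rw [this]
      linarith
    · intro b hb
      have hmid : J < (((I + b) / 2 : ℝ) : EReal) := by
        rw [show J = ((I : ℝ) : EReal) from (EReal.coe_toReal hJtop hJ).symm]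
        exact_mod_cast (by linarith : I < (I + b) / 2)
      rw [hJdef, iInf_lt_iff] at hmid
      obtain ⟨⟨k, hk⟩, hklt⟩ := hmid
      have hklt' : (α k + C) / k < (I + b) / 2 := by exact_mod_cast hklt
      filter_upwards [hub k hk (b - (I + b) / 2) (by linarith)] with n hn
      linarith

noncomputable def Ppart (μ : Measure FullShift) (g : FullShift → ℝ) : ℝ≥0∞ :=
  ∫⁻ x, ENNReal.ofReal (Real.log (g x)) ∂μ
noncomputable def Npart (μ : Measure FullShift) (g : FullShift → ℝ) : ℝ≥0∞ :=
  ∫⁻ x, ENNReal.ofReal (-Real.log (g x)) ∂μ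

lemma elogInt_eq (μ : Measure FullShift) (g : FullShift → ℝ) :
    elogInt μ g = ((Ppart μ g : ℝ≥0∞) : EReal) - ((Npart μ g : ℝ≥0∞) : EReal) := rfl

lemma measurable_shift : Measurable shift :=
  measurable_pi_lambda _ fun n => measurable_pi_apply (n + 1)

lemma iterate_mem_of_inv {X : Set FullShift} (hXinv : ∀ x ∈ X, shift x ∈ X) (n : ℕ) :
    ∀ x ∈ X, shift^[n] x ∈ X := by
  induction n with
  | zero => intro x hx; simpa using hx
  | succ k ih =>
    intro x hx
    rw [Function.iterate_succ_apply']
    exact hXinv _ (ih x hx)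

lemma aemeasurable_of_continuousOn {g : FullShift → ℝ} {X : Set FullShift} (hX : IsClosed X)
    {μ : Measure FullShift} (hg : ContinuousOn g X) (hμX : ∀ᵐ x ∂μ, x ∈ X) :
    AEMeasurable g μ := by
  have h2 : AEMeasurable g (μ.restrict X) := hg.aemeasurable hX.measurableSet
  rwa [Measure.restrict_eq_self_of_ae_mem hμX] at h2

lemma aemeasurable_ofReal_log {g : FullShift → ℝ} {μ : Measure FullShift}
    (hg : AEMeasurable g μ) :
    AEMeasurable (fun x => ENNReal.ofReal (Real.log (g x))) μ :=
  (ENNReal.measurable_ofReal.comp Real.measurable_log).comp_aemeasurable hg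

lemma aemeasurable_ofReal_neg_log {g : FullShift → ℝ} {μ : Measure FullShift}
    (hg : AEMeasurable g μ) :
    AEMeasurable (fun x => ENNReal.ofReal (-Real.log (g x))) μ :=
  (ENNReal.measurable_ofReal.comp Real.measurable_log.neg).comp_aemeasurable hg

lemma max_sub_max_neg (t : ℝ) : max t 0 - max (-t) 0 = t := by
  rcases le_total 0 t with h | h
  · rw [max_eq_left h, max_eq_right (by linarith)]; ring
  · rw [max_eq_right h, max_eq_left (by linarith)]; ring

lemma ofReal_max_zero (t : ℝ) : ENNReal.ofReal t = ENNReal.ofReal (max t 0) := by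
  rcases le_total 0 t with h | h
  · rw [max_eq_left h]
  · rw [max_eq_right h, ENNReal.ofReal_of_nonpos h, ENNReal.ofReal_zero]

lemma ofReal_ineq {u a b C : ℝ} (hC : 0 ≤ C) (h : u ≤ C + a + b) :
    ENNReal.ofReal u + ENNReal.ofReal (-a) + ENNReal.ofReal (-b) ≤
      ENNReal.ofReal C + ENNReal.ofReal a + ENNReal.ofReal b + ENNReal.ofReal (-u) := by
  rw [ofReal_max_zero u, ofReal_max_zero (-a), ofReal_max_zero (-b), ofReal_max_zero a,
    ofReal_max_zero b, ofReal_max_zero (-u)]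
  rw [← ENNReal.ofReal_add (le_max_right _ _) (le_max_right _ _),
    ← ENNReal.ofReal_add (by positivity) (le_max_right _ _)]
  rw [← ENNReal.ofReal_add hC (le_max_right _ _),
    ← ENNReal.ofReal_add (by positivity) (le_max_right _ _),
    ← ENNReal.ofReal_add (by positivity) (le_max_right _ _)]
  apply ENNReal.ofReal_le_ofReal
  have h1 := max_sub_max_neg u
  have h2 := max_sub_max_neg a
  have h3 := max_sub_max_neg b
  linarith

lemma coe_ennreal_eq_coe_toReal {a : ℝ≥0∞} (ha : a ≠ ⊤) :
    (a : EReal) = ((a.toReal : ℝ) : EReal) := by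
  conv_lhs => rw [← ENNReal.ofReal_toReal ha]
  rw [EReal.coe_ennreal_ofReal, max_eq_left ENNReal.toReal_nonneg]

lemma ereal_coe_sub_ne_top {a b : ℝ≥0∞} (ha : a ≠ ⊤) : ((a : EReal) - (b : EReal)) ≠ ⊤ := by
  rcases eq_or_ne b ⊤ with rfl | hb
  · rw [EReal.coe_ennreal_top, EReal.sub_top]; exact bot_ne_top
  · rw [coe_ennreal_eq_coe_toReal ha, coe_ennreal_eq_coe_toReal hb, ← EReal.coe_sub]
    exact EReal.coe_ne_top _

lemma ereal_coe_sub_bot {a : ℝ≥0∞} : ((a : EReal) - ((⊤ : ℝ≥0∞) : EReal)) = ⊥ := by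
  rw [EReal.coe_ennreal_top, EReal.sub_top]

/-- Subadditivity of the EReal log-integral. -/
lemma elog_subadd {X : Set FullShift} (hXinv : ∀ x ∈ X, shift x ∈ X)
    {f : ℕ → FullShift → ℝ} {C : ℝ} (hC0 : 0 ≤ C) {n m : ℕ}
    (hposn : ∀ x ∈ X, 0 < f n x) (hposm : ∀ x ∈ X, 0 < f m x)
    (hposnm : ∀ x ∈ X, 0 < f (n + m) x)
    (hsub : ∀ x ∈ X, f (n + m) x ≤ Real.exp C * (f n x * f m (shift^[n] x)))
    {μ : Measure FullShift} [IsProbabilityMeasure μ]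
    (hshift : MeasurePreserving shift μ μ) (hμX : ∀ᵐ x ∂μ, x ∈ X)
    (hmn : AEMeasurable (f n) μ) (hmm : AEMeasurable (f m) μ)
    (hmnm : AEMeasurable (f (n + m)) μ)
    (hPn : Ppart μ (f n) ≠ ⊤) (hPm : Ppart μ (f m) ≠ ⊤) :
    elogInt μ (f (n + m)) ≤ elogInt μ (f n) + elogInt μ (f m) + (C : EReal) := by
  have hit : MeasurePreserving (shift^[n]) μ μ := hshift.iterate n
  set g' : FullShift → ℝ := fun x => f m (shift^[n] x) with hg'
  have hm' : AEMeasurable g' μ := hmm.comp_quasiMeasurePreserving hit.quasiMeasurePreserving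
  -- transfer integrals through the shift
  have hmap : Measure.map (shift^[n]) μ = μ := hit.map_eq
  have hP2 : Ppart μ g' = Ppart μ (f m) := by
    unfold Ppart
    conv_rhs => rw [← hmap]
    rw [lintegral_map' (by rw [hmap]; exact aemeasurable_ofReal_log hmm) hit.aemeasurable]
  have hN2 : Npart μ g' = Npart μ (f m) := by
    unfold Npart
    conv_rhs => rw [← hmap]
    rw [lintegral_map' (by rw [hmap]; exact aemeasurable_ofReal_neg_log hmm) hit.aemeasurable]
  -- pointwise a.e. inequality
  have hae : ∀ᵐ x ∂μ, Real.log (f (n + m) x) ≤ C + Real.log (f n x) + Real.log (g' x) := by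
    filter_upwards [hμX] with x hx
    have hx' : shift^[n] x ∈ X := iterate_mem_of_inv hXinv n x hx
    have h1 : 0 < f n x := hposn x hx
    have h2 : 0 < f m (shift^[n] x) := hposm _ hx'
    have h3 := hsub x hx
    calc Real.log (f (n + m) x) ≤ Real.log (Real.exp C * (f n x * f m (shift^[n] x))) :=
          Real.log_le_log (hposnm x hx) h3
      _ = C + Real.log (f n x) + Real.log (g' x) := by
          rw [Real.log_mul (Real.exp_ne_zero C) (by positivity),
            Real.log_mul h1.ne' h2.ne', Real.log_exp]
          ring
  rw [elogInt_eq, elogInt_eq, elogInt_eq, ← hP2, ← hN2]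
  have hP2top : Ppart μ g' ≠ ⊤ := by rw [hP2]; exact hPm
  have hCtop : (ENNReal.ofReal C) ≠ ⊤ := ENNReal.ofReal_ne_top
  have haeu := aemeasurable_ofReal_log hmnm
  have haeun := aemeasurable_ofReal_neg_log hmnm
  have hae1 := aemeasurable_ofReal_log hmn
  have hae1n := aemeasurable_ofReal_neg_log hmn
  have hae2 := aemeasurable_ofReal_log hm'
  have hae2n := aemeasurable_ofReal_neg_log hm'
  have hconst : ∫⁻ _, ENNReal.ofReal C ∂μ = ENNReal.ofReal C := by
    rw [lintegral_const, measure_univ, mul_one]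
  have hboundN1 : Npart μ (f n) ≤ ENNReal.ofReal C + Ppart μ g' + Npart μ (f (n + m)) := by
    have hptw : ∀ᵐ x ∂μ, ENNReal.ofReal (-Real.log (f n x)) ≤
        ENNReal.ofReal C + ENNReal.ofReal (Real.log (g' x)) +
          ENNReal.ofReal (-Real.log (f (n + m) x)) := by
      filter_upwards [hae] with x hx
      calc ENNReal.ofReal (-Real.log (f n x))
          ≤ ENNReal.ofReal (C + Real.log (g' x) + (-Real.log (f (n + m) x))) :=
            ENNReal.ofReal_le_ofReal (by linarith)
        _ ≤ ENNReal.ofReal (C + Real.log (g' x)) + ENNReal.ofReal (-Real.log (f (n + m) x)) :=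
            ENNReal.ofReal_add_le
        _ ≤ _ := add_le_add_left ENNReal.ofReal_add_le _
    calc Npart μ (f n) ≤ ∫⁻ x, (ENNReal.ofReal C + ENNReal.ofReal (Real.log (g' x)) +
          ENNReal.ofReal (-Real.log (f (n + m) x))) ∂μ := lintegral_mono_ae hptw
      _ = ENNReal.ofReal C + Ppart μ g' + Npart μ (f (n + m)) := by
          rw [lintegral_add_left' (f := fun x => ENNReal.ofReal C + ENNReal.ofReal (Real.log (g' x)))
              (aemeasurable_const.add hae2) _,
            lintegral_add_left' aemeasurable_const _, hconst]
          rfl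
  have hboundN2 : Npart μ g' ≤ ENNReal.ofReal C + Ppart μ (f n) + Npart μ (f (n + m)) := by
    have hptw : ∀ᵐ x ∂μ, ENNReal.ofReal (-Real.log (g' x)) ≤
        ENNReal.ofReal C + ENNReal.ofReal (Real.log (f n x)) +
          ENNReal.ofReal (-Real.log (f (n + m) x)) := by
      filter_upwards [hae] with x hx
      calc ENNReal.ofReal (-Real.log (g' x))
          ≤ ENNReal.ofReal (C + Real.log (f n x) + (-Real.log (f (n + m) x))) :=
            ENNReal.ofReal_le_ofReal (by linarith)
        _ ≤ ENNReal.ofReal (C + Real.log (f n x)) + ENNReal.ofReal (-Real.log (f (n + m) x)) :=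
            ENNReal.ofReal_add_le
        _ ≤ _ := add_le_add_left ENNReal.ofReal_add_le _
    calc Npart μ g' ≤ ∫⁻ x, (ENNReal.ofReal C + ENNReal.ofReal (Real.log (f n x)) +
          ENNReal.ofReal (-Real.log (f (n + m) x))) ∂μ := lintegral_mono_ae hptw
      _ = ENNReal.ofReal C + Ppart μ (f n) + Npart μ (f (n + m)) := by
          rw [lintegral_add_left' (f := fun x => ENNReal.ofReal C + ENNReal.ofReal (Real.log (f n x)))
              (aemeasurable_const.add hae1) _,
            lintegral_add_left' aemeasurable_const _, hconst]
          rfl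
  by_cases hN1top : Npart μ (f n) = ⊤
  · have hNu : Npart μ (f (n + m)) = ⊤ := by
      by_contra h
      rw [hN1top] at hboundN1
      exact (ENNReal.add_ne_top.2 ⟨ENNReal.add_ne_top.2 ⟨hCtop, hP2top⟩, h⟩)
        (top_le_iff.1 hboundN1)
    rw [hNu, ereal_coe_sub_bot]
    exact bot_le
  by_cases hN2top : Npart μ g' = ⊤
  · have hNu : Npart μ (f (n + m)) = ⊤ := by
      by_contra h
      rw [hN2top] at hboundN2
      exact (ENNReal.add_ne_top.2 ⟨ENNReal.add_ne_top.2 ⟨hCtop, hPn⟩, h⟩)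
        (top_le_iff.1 hboundN2)
    rw [hNu, ereal_coe_sub_bot]
    exact bot_le
  by_cases hNutop : Npart μ (f (n + m)) = ⊤
  · rw [hNutop, ereal_coe_sub_bot]
    exact bot_le
  -- main inequality, all finite
  have hmain : Ppart μ (f (n + m)) + Npart μ (f n) + Npart μ g' ≤
      ENNReal.ofReal C + Ppart μ (f n) + Ppart μ g' + Npart μ (f (n + m)) := by
    have hptw : ∀ᵐ x ∂μ, ENNReal.ofReal (Real.log (f (n + m) x)) +
        ENNReal.ofReal (-Real.log (f n x)) + ENNReal.ofReal (-Real.log (g' x)) ≤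
        ENNReal.ofReal C + ENNReal.ofReal (Real.log (f n x)) +
          ENNReal.ofReal (Real.log (g' x)) + ENNReal.ofReal (-Real.log (f (n + m) x)) := by
      filter_upwards [hae] with x hx
      exact ofReal_ineq hC0 hx
    calc Ppart μ (f (n + m)) + Npart μ (f n) + Npart μ g'
        = ∫⁻ x, (ENNReal.ofReal (Real.log (f (n + m) x)) +
            ENNReal.ofReal (-Real.log (f n x)) + ENNReal.ofReal (-Real.log (g' x))) ∂μ := by
          rw [lintegral_add_left' (f := fun x => ENNReal.ofReal (Real.log (f (n + m) x))
              + ENNReal.ofReal (-Real.log (f n x))) (haeu.add hae1n) _, lintegral_add_left' haeu _]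
          rfl
      _ ≤ ∫⁻ x, (ENNReal.ofReal C + ENNReal.ofReal (Real.log (f n x)) +
            ENNReal.ofReal (Real.log (g' x)) + ENNReal.ofReal (-Real.log (f (n + m) x))) ∂μ :=
          lintegral_mono_ae hptw
      _ = ENNReal.ofReal C + Ppart μ (f n) + Ppart μ g' + Npart μ (f (n + m)) := by
          rw [lintegral_add_left' (f := fun x => ENNReal.ofReal C + ENNReal.ofReal (Real.log (f n x))
                + ENNReal.ofReal (Real.log (g' x))) ((aemeasurable_const.add hae1).add hae2) _,
            lintegral_add_left' (f := fun x => ENNReal.ofReal C + ENNReal.ofReal (Real.log (f n x)))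
              (aemeasurable_const.add hae1) _,
            lintegral_add_left' aemeasurable_const _, hconst]
          rfl
  have hRtop : ENNReal.ofReal C + Ppart μ (f n) + Ppart μ g' + Npart μ (f (n + m)) ≠ ⊤ :=
    ENNReal.add_ne_top.2 ⟨ENNReal.add_ne_top.2 ⟨ENNReal.add_ne_top.2 ⟨hCtop, hPn⟩, hP2top⟩, hNutop⟩
  have hPutop : Ppart μ (f (n + m)) ≠ ⊤ := by
    intro h
    apply hRtop
    refine top_le_iff.1 ?_
    calc (⊤ : ℝ≥0∞) = Ppart μ (f (n + m)) := h.symm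
      _ ≤ Ppart μ (f (n + m)) + Npart μ (f n) + Npart μ g' :=
          le_trans (self_le_add_right _ _) (self_le_add_right _ _)
      _ ≤ _ := hmain
  have hr := ENNReal.toReal_mono hRtop hmain
  rw [ENNReal.toReal_add (ENNReal.add_ne_top.2 ⟨hPutop, hN1top⟩) hN2top,
    ENNReal.toReal_add hPutop hN1top,
    ENNReal.toReal_add (ENNReal.add_ne_top.2 ⟨ENNReal.add_ne_top.2 ⟨hCtop, hPn⟩, hP2top⟩) hNutop,
    ENNReal.toReal_add (ENNReal.add_ne_top.2 ⟨hCtop, hPn⟩) hP2top,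
    ENNReal.toReal_add hCtop hPn, ENNReal.toReal_ofReal hC0] at hr
  rw [coe_ennreal_eq_coe_toReal hPutop, coe_ennreal_eq_coe_toReal hNutop,
    coe_ennreal_eq_coe_toReal hPn, coe_ennreal_eq_coe_toReal hN1top,
    coe_ennreal_eq_coe_toReal hP2top, coe_ennreal_eq_coe_toReal hN2top,
    ← EReal.coe_sub, ← EReal.coe_sub, ← EReal.coe_sub, ← EReal.coe_add, ← EReal.coe_add,
    EReal.coe_le_coe_iff]
  linarith

end CSS

namespace CSS
variable {X : Set FullShift} {f : ℕ → FullShift → ℝ}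

lemma pairwise_disjoint_cyl (n : ℕ) :
    Pairwise (Function.onFun Disjoint fun w : {w : List ℕ // w.length = n} => cyl w.1) := by
  intro i j hij
  rw [Function.onFun, Set.disjoint_iff_inter_eq_empty]
  by_contra h
  obtain ⟨x, hxi, hxj⟩ := Set.nonempty_iff_ne_empty.2 h
  exact hij (Subtype.ext (eq_of_mem_cyl (i.2.trans j.2.symm) hxi hxj))


lemma Ppart_ne_top {n : ℕ} {M : ℝ} (hpos : ∀ x ∈ X, 0 < f n x) (hvar : VarBddBy X f n M)
    {μ : Measure FullShift} [IsProbabilityMeasure μ] (hμX : ∀ᵐ x ∂μ, x ∈ X)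
    (hZ : Zn X f n ≠ ⊤) : Ppart μ (f n) ≠ ⊤ := by
  set z := (Zn X f n).toReal with hzdef
  have hbound : ∀ x ∈ X, ENNReal.ofReal (Real.log (f n x)) ≤ ENNReal.ofReal |Real.log z| := by
    intro x hx
    apply ENNReal.ofReal_le_ofReal
    have hallow : Allow X (prefixWord x n) := ⟨x, hx, mem_cyl_prefixWord x n⟩
    have hsup := supW_le hpos hvar (length_prefixWord x n) hallow
    have h1 : f n x ≤ supW X f (prefixWord x n) := hsup.1 x ⟨hx, mem_cyl_prefixWord x n⟩
    have h2 : supW X f (prefixWord x n) ≤ z := by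
      have h3 := ENNReal.toReal_mono hZ (ofReal_supW_le_Zn (length_prefixWord x n) hallow)
      rwa [ENNReal.toReal_ofReal hsup.2.le] at h3
    calc Real.log (f n x) ≤ Real.log z := Real.log_le_log (hpos x hx) (h1.trans h2)
      _ ≤ |Real.log z| := le_abs_self _
  have hle : Ppart μ (f n) ≤ ∫⁻ _, ENNReal.ofReal |Real.log z| ∂μ :=
    lintegral_mono_ae (hμX.mono fun x hx => hbound x hx)
  rw [lintegral_const, measure_univ, mul_one] at hle
  exact (hle.trans_lt ENNReal.ofReal_lt_top).ne

lemma key_entropy {n : ℕ} {M : ℝ}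
    (hpos : ∀ x ∈ X, 0 < f n x) (hvar : VarBddBy X f n M)
    {μ : Measure FullShift} [IsProbabilityMeasure μ] (hμX : ∀ᵐ x ∂μ, x ∈ X)
    (hZtop : Zn X f n ≠ ⊤) (hZ0 : Zn X f n ≠ 0) (hNtop : Npart μ (f n) ≠ ⊤) :
    entH μ n ≠ ⊤ ∧
      (entH μ n).toReal + ((Ppart μ (f n)).toReal - (Npart μ (f n)).toReal)
        ≤ Real.log (Zn X f n).toReal := by
  classical
  set z := (Zn X f n).toReal with hzdef
  have hz : 0 < z := ENNReal.toReal_pos hZ0 hZtop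
  have hμcompl : μ Xᶜ = 0 := by
    have := hμX
    rwa [MeasureTheory.ae_iff] at this
  have hptop : ∀ w : {w : List ℕ // w.length = n}, μ (cyl w.1) ≠ ⊤ :=
    fun w => measure_ne_top μ _
  have hsum1 : ∑' w : {w : List ℕ // w.length = n}, μ (cyl w.1) = 1 := by
    rw [tsum_measure_cyl, measure_univ]
  have hp0 : ∀ w : {w : List ℕ // w.length = n}, ¬ Allow X w.1 → μ (cyl w.1) = 0 := by
    intro w hw
    refine measure_mono_null (fun x hx hxX => hw ⟨x, hxX, hx⟩) hμcompl
  have hs_nonneg : ∀ w : {w : List ℕ // w.length = n}, 0 ≤ supW X f w.1 := by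
    intro w
    by_cases hall : Allow X w.1
    · exact (supW_le hpos hvar w.2 hall).2.le
    · rw [supW_of_not_allow hall]
  have hs_le_z : ∀ w : {w : List ℕ // w.length = n}, supW X f w.1 ≤ z := by
    intro w
    by_cases hall : Allow X w.1
    · have h3 := ENNReal.toReal_mono hZtop (ofReal_supW_le_Zn w.2 hall)
      rwa [ENNReal.toReal_ofReal (hs_nonneg w)] at h3
    · rw [supW_of_not_allow hall]; exact hz.le
  -- pointwise real inequality
  have hPW : ∀ w : {w : List ℕ // w.length = n},
      Real.negMulLog (μ (cyl w.1)).toReal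
        + (μ (cyl w.1)).toReal * max (Real.log (supW X f w.1)) 0
        + (μ (cyl w.1)).toReal
        + (μ (cyl w.1)).toReal * max (-Real.log z) 0
      ≤ supW X f w.1 / z
        + (μ (cyl w.1)).toReal * max (-Real.log (supW X f w.1)) 0
        + (μ (cyl w.1)).toReal * max (Real.log z) 0 := by
    intro w
    have hpr0 : 0 ≤ (μ (cyl w.1)).toReal := ENNReal.toReal_nonneg
    rcases eq_or_lt_of_le hpr0 with hpr | hpr
    · rw [← hpr]
      have : 0 ≤ supW X f w.1 / z := div_nonneg (hs_nonneg w) hz.le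
      simpa [Real.negMulLog_zero] using this
    · have hall : Allow X w.1 := by
        by_contra hall
        rw [hp0 w hall] at hpr
        simp at hpr
      have hs0 : 0 < supW X f w.1 := (supW_le hpos hvar w.2 hall).2
      set pr := (μ (cyl w.1)).toReal
      set s := supW X f w.1
      have hcore : pr * Real.log s - pr * Real.log pr - pr * Real.log z ≤ s / z - pr := by
        have hpos' : 0 < s / (pr * z) := by positivity
        have h1 := Real.log_le_sub_one_of_pos hpos'
        rw [Real.log_div hs0.ne' (by positivity), Real.log_mul hpr.ne' hz.ne'] at h1
        have h2 := mul_le_mul_of_nonneg_left h1 hpr0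
        have h3 : pr * (s / (pr * z) - 1) = s / z - pr := by field_simp
        have h4 : pr * (Real.log s - (Real.log pr + Real.log z))
            = pr * Real.log s - pr * Real.log pr - pr * Real.log z := by ring
        rw [h3, h4] at h2
        exact h2
      have hm1 : pr * max (Real.log s) 0 - pr * max (-Real.log s) 0 = pr * Real.log s := by
        rw [← mul_sub, max_sub_max_neg]
      have hm2 : pr * max (Real.log z) 0 - pr * max (-Real.log z) 0 = pr * Real.log z := by
        rw [← mul_sub, max_sub_max_neg]
      rw [Real.negMulLog]
      linarith
  -- pointwise ENNReal inequality
  have hPWE : ∀ w : {w : List ℕ // w.length = n},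
      ENNReal.ofReal (Real.negMulLog (μ (cyl w.1)).toReal)
        + μ (cyl w.1) * ENNReal.ofReal (Real.log (supW X f w.1))
        + ENNReal.ofReal ((μ (cyl w.1)).toReal)
        + μ (cyl w.1) * ENNReal.ofReal (-Real.log z)
      ≤ ENNReal.ofReal (supW X f w.1 / z)
        + μ (cyl w.1) * ENNReal.ofReal (-Real.log (supW X f w.1))
        + μ (cyl w.1) * ENNReal.ofReal (Real.log z) := by
    intro w
    have hpr0 : 0 ≤ (μ (cyl w.1)).toReal := ENNReal.toReal_nonneg
    have hpr1 : (μ (cyl w.1)).toReal ≤ 1 := by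
      apply ENNReal.toReal_le_of_le_ofReal one_pos.le
      simpa using prob_le_one
    have hterm : ∀ t : ℝ, μ (cyl w.1) * ENNReal.ofReal t
        = ENNReal.ofReal ((μ (cyl w.1)).toReal * max t 0) := by
      intro t
      rw [ENNReal.ofReal_mul hpr0, ENNReal.ofReal_toReal (hptop w), ← ofReal_max_zero t]
    rw [hterm, hterm, hterm, hterm]
    have hnml : 0 ≤ Real.negMulLog (μ (cyl w.1)).toReal := Real.negMulLog_nonneg hpr0 hpr1
    have e1 : 0 ≤ (μ (cyl w.1)).toReal * max (Real.log (supW X f w.1)) 0 := by positivity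
    have e3 : 0 ≤ (μ (cyl w.1)).toReal * max (-Real.log z) 0 := by positivity
    have e4 : 0 ≤ supW X f w.1 / z := div_nonneg (hs_nonneg w) hz.le
    have e5 : 0 ≤ (μ (cyl w.1)).toReal * max (-Real.log (supW X f w.1)) 0 := by positivity
    rw [← ENNReal.ofReal_add hnml e1, ← ENNReal.ofReal_add (add_nonneg hnml e1) hpr0,
      ← ENNReal.ofReal_add (add_nonneg (add_nonneg hnml e1) hpr0) e3,
      ← ENNReal.ofReal_add e4 e5, ← ENNReal.ofReal_add (add_nonneg e4 e5) (by positivity)]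
    exact ENNReal.ofReal_le_ofReal (hPW w)
  -- sum identities
  have hT4 : ∑' w : {w : List ℕ // w.length = n}, μ (cyl w.1) * ENNReal.ofReal (-Real.log z)
      = ENNReal.ofReal (-Real.log z) := by
    rw [ENNReal.tsum_mul_right, hsum1, one_mul]
  have hT7 : ∑' w : {w : List ℕ // w.length = n}, μ (cyl w.1) * ENNReal.ofReal (Real.log z)
      = ENNReal.ofReal (Real.log z) := by
    rw [ENNReal.tsum_mul_right, hsum1, one_mul]
  have hT3' : ∑' w : {w : List ℕ // w.length = n}, ENNReal.ofReal ((μ (cyl w.1)).toReal) = 1 := by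
    rw [tsum_congr (fun w : {w : List ℕ // w.length = n} => ENNReal.ofReal_toReal (hptop w)), hsum1]
  have hT5 : ∑' w : {w : List ℕ // w.length = n}, ENNReal.ofReal (supW X f w.1 / z) = 1 := by
    have hcg : ∀ w : {w : List ℕ // w.length = n}, ENNReal.ofReal (supW X f w.1 / z)
        = ENNReal.ofReal (supW X f w.1) * (ENNReal.ofReal z)⁻¹ := by
      intro w
      rw [div_eq_mul_inv, ENNReal.ofReal_mul (hs_nonneg w), ENNReal.ofReal_inv_of_pos hz]
    rw [tsum_congr hcg, ENNReal.tsum_mul_right, ← Zn_eq_tsum_len,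
      ENNReal.ofReal_toReal hZtop, ← div_eq_mul_inv, ENNReal.div_self hZ0 hZtop]
  -- master inequality
  have hentH : entH μ n = ∑' w : {w : List ℕ // w.length = n},
      ENNReal.ofReal (Real.negMulLog (μ (cyl w.1)).toReal) := rfl
  have hmaster : entH μ n
      + (∑' w : {w : List ℕ // w.length = n}, μ (cyl w.1) * ENNReal.ofReal (Real.log (supW X f w.1)))
      + 1 + ENNReal.ofReal (-Real.log z)
      ≤ 1 + (∑' w : {w : List ℕ // w.length = n}, μ (cyl w.1) * ENNReal.ofReal (-Real.log (supW X f w.1)))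
        + ENNReal.ofReal (Real.log z) := by
    have h := ENNReal.tsum_le_tsum hPWE
    rw [ENNReal.tsum_add, ENNReal.tsum_add, ENNReal.tsum_add, ENNReal.tsum_add,
      ENNReal.tsum_add] at h
    rw [hT4, hT7, hT5, hT3', ← hentH] at h
    exact h
  set Q2 := ∑' w : {w : List ℕ // w.length = n},
    μ (cyl w.1) * ENNReal.ofReal (Real.log (supW X f w.1)) with hQ2
  set Q6 := ∑' w : {w : List ℕ // w.length = n},
    μ (cyl w.1) * ENNReal.ofReal (-Real.log (supW X f w.1)) with hQ6
  -- integral comparisons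
  have hPdecomp : Ppart μ (f n)
      = ∑' w : {w : List ℕ // w.length = n}, ∫⁻ x in cyl w.1, ENNReal.ofReal (Real.log (f n x)) ∂μ := by
    unfold Ppart
    rw [← setLIntegral_univ, ← iUnion_cyl n,
      lintegral_iUnion (fun w : {w : List ℕ // w.length = n} => measurableSet_cyl w.1) (pairwise_disjoint_cyl n)]
  have hNdecomp : Npart μ (f n)
      = ∑' w : {w : List ℕ // w.length = n}, ∫⁻ x in cyl w.1, ENNReal.ofReal (-Real.log (f n x)) ∂μ := by
    unfold Npart
    rw [← setLIntegral_univ, ← iUnion_cyl n,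
      lintegral_iUnion (fun w : {w : List ℕ // w.length = n} => measurableSet_cyl w.1) (pairwise_disjoint_cyl n)]
  have hPQ2 : Ppart μ (f n) ≤ Q2 := by
    rw [hPdecomp, hQ2]
    apply ENNReal.tsum_le_tsum
    intro w
    by_cases hall : Allow X w.1
    · have hb : ∀ᵐ x ∂(μ.restrict (cyl w.1)),
          ENNReal.ofReal (Real.log (f n x)) ≤ ENNReal.ofReal (Real.log (supW X f w.1)) := by
        filter_upwards [ae_restrict_mem (measurableSet_cyl w.1), ae_restrict_of_ae hμX]
          with x hxc hxX
        exact ENNReal.ofReal_le_ofReal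
          (Real.log_le_log (hpos x hxX) ((supW_le hpos hvar w.2 hall).1 x ⟨hxX, hxc⟩))
      calc ∫⁻ x in cyl w.1, ENNReal.ofReal (Real.log (f n x)) ∂μ
          ≤ ∫⁻ _ in cyl w.1, ENNReal.ofReal (Real.log (supW X f w.1)) ∂μ := lintegral_mono_ae hb
        _ = μ (cyl w.1) * ENNReal.ofReal (Real.log (supW X f w.1)) := by
            rw [setLIntegral_const, mul_comm]
    · have hz0 : μ.restrict (cyl w.1) = 0 := Measure.restrict_eq_zero.2 (hp0 w hall)
      rw [hz0, lintegral_zero_measure]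
      exact zero_le
  have hQ6N : Q6 ≤ Npart μ (f n) := by
    rw [hNdecomp, hQ6]
    apply ENNReal.tsum_le_tsum
    intro w
    by_cases hall : Allow X w.1
    · have hb : ∀ᵐ x ∂(μ.restrict (cyl w.1)),
          ENNReal.ofReal (-Real.log (supW X f w.1)) ≤ ENNReal.ofReal (-Real.log (f n x)) := by
        filter_upwards [ae_restrict_mem (measurableSet_cyl w.1), ae_restrict_of_ae hμX]
          with x hxc hxX
        have := Real.log_le_log (hpos x hxX) ((supW_le hpos hvar w.2 hall).1 x ⟨hxX, hxc⟩)
        exact ENNReal.ofReal_le_ofReal (by linarith)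
      calc μ (cyl w.1) * ENNReal.ofReal (-Real.log (supW X f w.1))
          = ∫⁻ _ in cyl w.1, ENNReal.ofReal (-Real.log (supW X f w.1)) ∂μ := by
            rw [setLIntegral_const, mul_comm]
        _ ≤ ∫⁻ x in cyl w.1, ENNReal.ofReal (-Real.log (f n x)) ∂μ := lintegral_mono_ae hb
    · rw [hp0 w hall, zero_mul]
      exact zero_le
  -- cancellation
  have hmaster2 : entH μ n + Q2 + ENNReal.ofReal (-Real.log z)
      ≤ Q6 + ENNReal.ofReal (Real.log z) := by
    have h1 : 1 + (entH μ n + Q2 + ENNReal.ofReal (-Real.log z))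
        ≤ 1 + (Q6 + ENNReal.ofReal (Real.log z)) := by
      calc 1 + (entH μ n + Q2 + ENNReal.ofReal (-Real.log z))
          = entH μ n + Q2 + 1 + ENNReal.ofReal (-Real.log z) := by ring
        _ ≤ 1 + Q6 + ENNReal.ofReal (Real.log z) := hmaster
        _ = 1 + (Q6 + ENNReal.ofReal (Real.log z)) := by ring
    exact (ENNReal.add_le_add_iff_left ENNReal.one_ne_top).1 h1
  -- finiteness
  have hQ6top : Q6 ≠ ⊤ := fun h => hNtop (top_le_iff.1 (h ▸ hQ6N))
  have hRHStop : Q6 + ENNReal.ofReal (Real.log z) ≠ ⊤ :=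
    ENNReal.add_ne_top.2 ⟨hQ6top, ENNReal.ofReal_ne_top⟩
  have hLfin : entH μ n + Q2 + ENNReal.ofReal (-Real.log z) ≠ ⊤ :=
    fun h => hRHStop (top_le_iff.1 (h ▸ hmaster2))
  have hetop : entH μ n ≠ ⊤ :=
    fun h => hLfin (by rw [h, top_add, top_add])
  have hQ2top : Q2 ≠ ⊤ := by
    intro h
    apply hLfin
    rw [h, add_top, top_add]
  have hPtop : Ppart μ (f n) ≠ ⊤ := fun h => hQ2top (top_le_iff.1 (h ▸ hPQ2))
  -- extract reals
  have hr := ENNReal.toReal_mono hRHStop hmaster2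
  rw [ENNReal.toReal_add (ENNReal.add_ne_top.2 ⟨hetop, hQ2top⟩) ENNReal.ofReal_ne_top,
    ENNReal.toReal_add hetop hQ2top,
    ENNReal.toReal_add hQ6top ENNReal.ofReal_ne_top] at hr
  have hq2 : (Ppart μ (f n)).toReal ≤ Q2.toReal := ENNReal.toReal_mono hQ2top hPQ2
  have hq6 : Q6.toReal ≤ (Npart μ (f n)).toReal := ENNReal.toReal_mono hNtop hQ6N
  have hcz : (ENNReal.ofReal (Real.log z)).toReal = max (Real.log z) 0 := by
    rw [ofReal_max_zero, ENNReal.toReal_ofReal (le_max_right _ _)]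
  have hcz' : (ENNReal.ofReal (-Real.log z)).toReal = max (-Real.log z) 0 := by
    rw [ofReal_max_zero, ENNReal.toReal_ofReal (le_max_right _ _)]
  have hmz := max_sub_max_neg (Real.log z)
  refine ⟨hetop, ?_⟩
  rw [hcz, hcz'] at hr
  linarith

end CSS

namespace CSS

/-- For a sequence with tempered variation satisfying (C1) and (D2) on a
countable-alphabet subshift with `P(F) < ∞`: for every invariant probability measure `μ` the
limit `lim (1/n) ∫ log f_n dμ` exists in `[-∞, ∞)`, and whenever it is `> -∞` one has
`h_μ(σ) + lim (1/n) ∫ log f_n dμ ≤ P(F)`. -/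
theorem upper_bound_variational (X : Set FullShift) (hX : IsSubshift X)
    (f : ℕ → FullShift → ℝ) (hpos : SeqPos X f) (hcont : SeqCont X f)
    (htemp : Tempered X f) (hC1 : CondC1 X f) (hD2 : CondD2 X f)
    (hP : pressure X f ≠ ⊤) :
    ∀ μ : Measure FullShift, InvariantProb X μ →
      (∃ L : EReal, L ≠ ⊤ ∧ HasLyap f μ L) ∧
      (∀ L : EReal, HasLyap f μ L → L ≠ ⊥ → entropy μ + L ≤ pressure X f) := by
  obtain ⟨Mseq, hMvar, hMtend⟩ := htemp
  obtain ⟨C, hC0, hCsub⟩ := hC1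
  -- eventually Zn ≠ ⊤
  have hZev : ∀ᶠ n : ℕ in atTop, Zn X f n ≠ ⊤ := by
    have hlt : pressure X f < ⊤ := lt_top_iff_ne_top.2 hP
    have hev := Filter.eventually_lt_of_limsup_lt hlt
    filter_upwards [hev, eventually_ge_atTop 1] with n h1 hn1
    intro hZ
    rw [hZ, ENNReal.log_top] at h1
    have hpos' : (0 : EReal) < (((n : ℝ) : EReal))⁻¹ := by
      rw [← EReal.coe_inv]
      apply EReal.coe_pos.2
      have : (0:ℝ) < n := by exact_mod_cast hn1
      positivity
    rw [EReal.mul_top_of_pos hpos'] at h1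
    exact lt_irrefl _ h1
  obtain ⟨N₀, hN₀⟩ := eventually_atTop.1 hZev
  set N : ℕ := max N₀ 1 with hNdef
  have hN1 : 0 < N := lt_of_lt_of_le one_pos (le_max_right _ _)
  have hNge : ∀ n, N ≤ n → Zn X f n ≠ ⊤ ∧ 0 < n := fun n hn =>
    ⟨hN₀ n (le_trans (le_max_left _ _) hn), lt_of_lt_of_le (lt_of_lt_of_le one_pos (le_max_right _ _)) hn⟩
  intro μ hμ
  obtain ⟨hprob, hμX1, hpres⟩ := hμ
  haveI := hprob
  have hXmeas : MeasurableSet X := hX.1.measurableSet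
  have hμcompl : μ Xᶜ = 0 := by
    have h := measure_compl hXmeas (measure_ne_top μ X)
    rw [hμX1, measure_univ] at h
    simpa using h
  have hμae : ∀ᵐ x ∂μ, x ∈ X := by
    rw [MeasureTheory.ae_iff]
    exact hμcompl
  have hXne : X.Nonempty :=
    MeasureTheory.nonempty_of_measure_ne_zero (by rw [hμX1]; exact one_ne_zero)
  have hXinv : ∀ x ∈ X, shift x ∈ X := fun x hx => hX.2 ⟨x, hx, rfl⟩
  have hmeas : ∀ n, 0 < n → AEMeasurable (f n) μ := fun n hn =>
    aemeasurable_of_continuousOn hX.1 (hcont n hn) hμae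
  have hZ0 : ∀ n, 0 < n → Zn X f n ≠ 0 := by
    intro n hn h0
    obtain ⟨x, hx⟩ := hXne
    have hallow : Allow X (prefixWord x n) := ⟨x, hx, mem_cyl_prefixWord x n⟩
    have hle := ofReal_supW_le_Zn (f := f) (length_prefixWord x n) hallow
    have h2 : 0 < supW X f (prefixWord x n) :=
      (supW_le (hpos n hn) (hMvar n hn).2 (length_prefixWord x n) hallow).2
    rw [h0, le_zero_iff, ENNReal.ofReal_eq_zero] at hle
    linarith
  have hPfin : ∀ n, N ≤ n → Ppart μ (f n) ≠ ⊤ := by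
    intro n hn
    have h1 := hNge n hn
    exact Ppart_ne_top (hpos n h1.2) (hMvar n h1.2).2 hμae h1.1
  set A : ℕ → EReal := fun n => elogInt μ (f n) with hA
  have hAneTop : ∀ n, N ≤ n → A n ≠ ⊤ := by
    intro n hn
    rw [hA]
    show elogInt μ (f n) ≠ ⊤
    rw [elogInt_eq]
    exact ereal_coe_sub_ne_top (hPfin n hn)
  have hsubA : ∀ p q, N ≤ p → N ≤ q → A (p + q) ≤ A p + A q + (C : EReal) := by
    intro p q hp hq
    have hp1 : 0 < p := (hNge p hp).2
    have hq1 : 0 < q := (hNge q hq).2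
    exact elog_subadd hXinv hC0 (hpos p hp1) (hpos q hq1) (hpos _ (by omega))
      (fun x hx => hCsub p q hp1 hq1 x hx) hpres hμae (hmeas p hp1) (hmeas q hq1)
      (hmeas _ (by omega)) (hPfin p hp) (hPfin q hq)
  have hexists : ∃ L' : EReal, L' ≠ ⊤ ∧ Tendsto (lyapAvg f μ) atTop (𝓝 L') ∧
      (L' ≠ ⊥ → ∀ n, N ≤ n → A n ≠ ⊥) := by
    by_cases hbot : ∃ k, N ≤ k ∧ A k = ⊥
    · obtain ⟨k, hk, hAk⟩ := hbot
      have hev : lyapAvg f μ =ᶠ[atTop] (fun _ => (⊥ : EReal)) := by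
        filter_upwards [eventually_ge_atTop (k + N)] with n hn
        have hAn : A n = ⊥ := by
          have h2 := hsubA k (n - k) hk (by omega)
          rw [Nat.add_sub_cancel' (by omega : k ≤ n), hAk, EReal.bot_add, EReal.bot_add] at h2
          exact le_bot_iff.1 h2
        have hrfl : lyapAvg f μ n = ((n : ℝ)⁻¹ : EReal) * A n := rfl
        show lyapAvg f μ n = ⊥
        rw [hrfl, hAn]
        apply EReal.mul_bot_of_pos
        rw [← EReal.coe_inv]
        apply EReal.coe_pos.2
        have : (0:ℝ) < n := by
          have : 0 < n := by omega
          exact_mod_cast this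
        positivity
      exact ⟨⊥, bot_ne_top, tendsto_const_nhds.congr' hev.symm, fun h => absurd rfl h⟩
    · push_neg at hbot
      set α : ℕ → ℝ := fun n => (A n).toReal with hα
      have hAco : ∀ n, N ≤ n → A n = ((α n : ℝ) : EReal) := by
        intro n hn
        exact (EReal.coe_toReal (hAneTop n hn) (hbot n hn)).symm
      have hsubα : ∀ p q, N ≤ p → N ≤ q → α (p + q) ≤ α p + α q + C := by
        intro p q hp hq
        have h := hsubA p q hp hq
        rw [hAco _ (le_trans hp (by omega : p ≤ p + q)), hAco p hp, hAco q hq] at h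
        exact_mod_cast h
      obtain ⟨I, hItop, hItend⟩ := tail_fekete hN1 hsubα
      refine ⟨I, hItop, ?_, fun _ => hbot⟩
      apply hItend.congr'
      filter_upwards [eventually_ge_atTop N] with n hn
      have hn0 : (0:ℝ) < n := by exact_mod_cast (hNge n hn).2
      have hrfl : lyapAvg f μ n = ((n : ℝ)⁻¹ : EReal) * A n := rfl
      rw [hrfl, hAco n hn, ← EReal.coe_inv, ← EReal.coe_mul, inv_mul_eq_div]
  obtain ⟨L', hL'top, hL'tend, hL'bot⟩ := hexists
  refine ⟨⟨L', hL'top, hL'tend⟩, ?_⟩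
  intro L hLt hLbot
  have hLeq : L = L' := tendsto_nhds_unique hLt hL'tend
  have hAnb : ∀ n, N ≤ n → A n ≠ ⊥ := hL'bot (hLeq ▸ hLbot)
  have hNfin : ∀ n, N ≤ n → Npart μ (f n) ≠ ⊤ := by
    intro n hn h
    apply hAnb n hn
    show elogInt μ (f n) = ⊥
    rw [elogInt_eq, h, ereal_coe_sub_bot]
  have hkey : ∀ n, N ≤ n → entH μ n ≠ ⊤ ∧
      (entH μ n).toReal + ((Ppart μ (f n)).toReal - (Npart μ (f n)).toReal)
        ≤ Real.log (Zn X f n).toReal := by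
    intro n hn
    have h1 := hNge n hn
    exact key_entropy (hpos n h1.2) (hMvar n h1.2).2 hμae h1.1 (hZ0 n h1.2) (hNfin n hn)
  set U : ℕ → EReal := fun n => (((entH μ n).toReal / n : ℝ) : EReal) with hU
  set V : ℕ → EReal := fun n => lyapAvg f μ n with hV
  set Ws : ℕ → EReal := fun n => ((Real.log (Zn X f n).toReal / n : ℝ) : EReal) with hW
  have hUV : (U + V) ≤ᶠ[atTop] Ws := by
    filter_upwards [eventually_ge_atTop N] with n hn
    have h1 := hNge n hn
    have hn0 : (0:ℝ) < n := by exact_mod_cast h1.2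
    have hAn : A n = (((Ppart μ (f n)).toReal - (Npart μ (f n)).toReal : ℝ) : EReal) := by
      show elogInt μ (f n) = _
      rw [elogInt_eq, coe_ennreal_eq_coe_toReal (hPfin n hn),
        coe_ennreal_eq_coe_toReal (hNfin n hn), ← EReal.coe_sub]
    have hVn : V n = ((((Ppart μ (f n)).toReal - (Npart μ (f n)).toReal) / n : ℝ) : EReal) := by
      show ((n : ℝ)⁻¹ : EReal) * A n = _
      rw [hAn, ← EReal.coe_inv, ← EReal.coe_mul, inv_mul_eq_div]
    show U n + V n ≤ Ws n
    rw [hVn, hU, hW, ← EReal.coe_add, EReal.coe_le_coe_iff, ← add_div]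
    have hk := (hkey n hn).2
    gcongr
  have hent : entropy μ = limsup U atTop := by
    apply Filter.limsup_congr
    filter_upwards [eventually_ge_atTop N] with n hn
    rw [coe_ennreal_eq_coe_toReal (hkey n hn).1, ← EReal.coe_inv, ← EReal.coe_mul, inv_mul_eq_div]
  have hpress : pressure X f = limsup Ws atTop := by
    apply Filter.limsup_congr
    filter_upwards [eventually_ge_atTop N] with n hn
    have h1 := hNge n hn
    have hlog : ENNReal.log (Zn X f n) = ((Real.log (Zn X f n).toReal : ℝ) : EReal) := by
      simp [ENNReal.log, hZ0 n h1.2, h1.1]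
    rw [hlog, ← EReal.coe_inv, ← EReal.coe_mul, inv_mul_eq_div]
  have hLliminf : liminf V atTop = L' := hL'tend.liminf_eq
  calc entropy μ + L = limsup U atTop + liminf V atTop := by rw [hent, hLeq, hLliminf]
    _ ≤ limsup (U + V) atTop := EReal.le_limsup_add
    _ ≤ limsup Ws atTop := limsup_le_limsup hUV
    _ = pressure X f := hpress.symm

end CSS
end
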